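/- arXiv:1505.07205 — 11 statements merged into one kernel-verified Lean document; each statement's English description precedes it below -/
import Mathlib

section
/- For a contraction T on a complex Hilbert space, ker(A_T − I) = {x ∈ H : ‖T^n x‖ = ‖x‖ for all n}, i.e. the set of vectors on whose generated orbit T acts isometrically; equivalently x ∈ ker(A_T − I) iff lim_n ‖T^n x‖ = ‖x‖. -/
/-!
Since `‖Tⁿ x‖² = re ⟪T*ⁿ Tⁿ x, x⟫`, the squared norms `‖Tⁿ x‖²` converge to `re ⟪A x, x⟫`.
As a limit of the contractions `T*ⁿ Tⁿ`, `A` is a contraction, so `‖A x - x‖² ≤ 2 ‖x‖² - 2 re ⟪A x, x⟫`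
and `A x = x` exactly when that limit is `‖x‖²`. Finally `‖Tⁿ x‖` is antitone and bounded by `‖x‖`,
so it tends to `‖x‖` iff it is constantly `‖x‖`.
-/

open Filter Topology ContinuousLinearMap

open RCLike in
theorem eq_of_norm_le_of_re_inner_eq_norm_sq {𝕜 E : Type*} [RCLike 𝕜] [NormedAddCommGroup E]
    [InnerProductSpace 𝕜 E] {x y : E} (hy : ‖y‖ ≤ ‖x‖) (h : re (inner 𝕜 y x) = ‖x‖ ^ 2) :
    y = x := by
  have hsq : ‖y - x‖ ^ 2 ≤ 0 := by
    rw [@norm_sub_sq 𝕜, h]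
    nlinarith [norm_nonneg y]
  simpa [sub_eq_zero] using le_antisymm hsq (sq_nonneg _)

theorem norm_pow_le_one_of_norm_le_one {𝕜 E : Type*} [NontriviallyNormedField 𝕜]
    [SeminormedAddCommGroup E] [NormedSpace 𝕜 E] {T : E →L[𝕜] E} (hT : ‖T‖ ≤ 1) :
    ∀ n : ℕ, ‖T ^ n‖ ≤ 1
  | 0 => norm_id_le
  | n + 1 => by
    rw [pow_succ]
    exact (norm_mul_le _ _).trans
      (mul_le_one₀ (norm_pow_le_one_of_norm_le_one hT n) (norm_nonneg _) hT)

theorem antitone_norm_pow_apply {𝕜 E : Type*} [NontriviallyNormedField 𝕜]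
    [SeminormedAddCommGroup E] [NormedSpace 𝕜 E] {T : E →L[𝕜] E} (hT : ‖T‖ ≤ 1) (x : E) :
    Antitone fun n : ℕ => ‖(T ^ n) x‖ :=
  antitone_nat_of_succ_le fun n => by
    simpa [pow_succ'] using T.le_of_opNorm_le hT ((T ^ n) x)

theorem forall_norm_pow_apply_eq_iff_tendsto {𝕜 E : Type*} [NontriviallyNormedField 𝕜]
    [SeminormedAddCommGroup E] [NormedSpace 𝕜 E] {T : E →L[𝕜] E} (hT : ‖T‖ ≤ 1) (x : E) :
    (∀ n : ℕ, ‖(T ^ n) x‖ = ‖x‖) ↔ Tendsto (fun n : ℕ => ‖(T ^ n) x‖) atTop (𝓝 ‖x‖) := by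
  refine ⟨fun h => by simp only [h, tendsto_const_nhds], fun h n => ?_⟩
  refine le_antisymm ?_ ((antitone_norm_pow_apply hT x).le_of_tendsto h n)
  simpa using (T ^ n).le_of_opNorm_le (norm_pow_le_one_of_norm_le_one hT n) x

section adjoint

variable {ι 𝕜 E F : Type*} [RCLike 𝕜] [NormedAddCommGroup E] [InnerProductSpace 𝕜 E]
  [CompleteSpace E] [NormedAddCommGroup F] [InnerProductSpace 𝕜 F] [CompleteSpace F]
  {l : Filter ι} {S : ι → E →L[𝕜] F} {x y : E}

open RCLike in
theorem tendsto_norm_sq_of_tendsto_adjoint_apply_apply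
    (h : Tendsto (fun i => adjoint (S i) (S i x)) l (𝓝 y)) :
    Tendsto (fun i => ‖S i x‖ ^ 2) l (𝓝 (re (inner 𝕜 y x))) := by
  have := ((continuous_re (K := 𝕜)).tendsto _).comp (h.inner (tendsto_const_nhds (x := x)))
  simpa only [Function.comp_def, adjoint_inner_left, inner_self_eq_norm_sq] using this

theorem norm_le_of_tendsto_adjoint_apply_apply [l.NeBot] (hS : ∀ i, ‖S i‖ ≤ 1)
    (h : Tendsto (fun i => adjoint (S i) (S i x)) l (𝓝 y)) : ‖y‖ ≤ ‖x‖ := by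
  refine le_of_tendsto h.norm (Eventually.of_forall fun i => ?_)
  have hSS : ‖adjoint (S i) ∘L S i‖ ≤ 1 := by
    rw [norm_adjoint_comp_self]
    exact mul_le_one₀ (hS i) (norm_nonneg _) (hS i)
  simpa using (adjoint (S i) ∘L S i).le_of_opNorm_le hSS x

end adjoint

/-- For a contraction `T` with asymptotic limit `A` (SOT-limit of `T^{*n}T^n`),
`ker (A - I)` is the set of vectors on which all powers of `T` act isometrically;
equivalently `x ∈ ker (A - I)` iff `‖T^n x‖ → ‖x‖`. -/
theorem stmt3 {H : Type*} [NormedAddCommGroup H] [InnerProductSpace ℂ H] [CompleteSpace H]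
    (T : H →L[ℂ] H) (hT : ‖T‖ ≤ 1) (A : H →L[ℂ] H)
    (hA : ∀ x : H, Tendsto (fun n : ℕ => (ContinuousLinearMap.adjoint (T ^ n)) ((T ^ n) x))
      atTop (𝓝 (A x))) :
    ∀ x : H, (A x = x ↔ ∀ n : ℕ, ‖(T ^ n) x‖ = ‖x‖) ∧
      (A x = x ↔ Tendsto (fun n : ℕ => ‖(T ^ n) x‖) atTop (𝓝 ‖x‖)) := by
  intro x
  have hlim := tendsto_norm_sq_of_tendsto_adjoint_apply_apply (hA x)
  have hfix : A x = x ↔ RCLike.re (inner ℂ (A x) x) = ‖x‖ ^ 2 :=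
    ⟨fun h => by rw [h]; exact inner_self_eq_norm_sq x, eq_of_norm_le_of_re_inner_eq_norm_sq
      (norm_le_of_tendsto_adjoint_apply_apply (norm_pow_le_one_of_norm_le_one hT) (hA x))⟩
  have hconv : A x = x ↔ Tendsto (fun n : ℕ => ‖(T ^ n) x‖) atTop (𝓝 ‖x‖) := by
    rw [hfix]
    refine ⟨fun h => ?_, fun h => tendsto_nhds_unique hlim (h.pow 2)⟩
    rw [h] at hlim
    simpa only [Real.sqrt_sq (norm_nonneg _)] using hlim.sqrt
  exact ⟨hconv.trans (forall_norm_pow_apply_eq_iff_tendsto hT x).symm, hconv⟩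
end

section
/- If T is a contraction on a finite-dimensional complex Hilbert space, then its asymptotic limit A_T is an orthogonal projection (A_T = A_T^2), A_T = A_{T^*}, and the stable subspaces of T and T^* coincide. -/
open Filter Topology ContinuousLinearMap

open scoped InnerProductSpace

/-! In finite dimensions a subsequence `T ^ φ k` converges in norm to a contraction `S`, so
`A = S† S` and, for `T†` along the same subsequence, `A' = S S†`. Since `A = (T ^ m)† A T ^ m`
for every `m`, the limit gives `S† A S = A`: `S` is isometric on its range, which for a
contraction forces `A S = S`, and likewise `A' S† = S†`. Hence `A A' = A'` and `A' A = A`, and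
as both are self-adjoint, `A = A' = A ^ 2`. Finally `‖T ^ n x‖ ^ 2 → re ⟪A x, x⟫`, so the stable
vectors of `T` and of `T†` are those with `re ⟪A x, x⟫ = 0`. -/

theorem IsSelfAdjoint.eq_of_mul_eq_of_mul_eq {R : Type*} [Mul R] [StarMul R] {p q : R}
    (hp : IsSelfAdjoint p) (hq : IsSelfAdjoint q) (hpq : p * q = q) (hqp : q * p = p) :
    p = q :=
  calc p = star (q * p) := by rw [hqp, hp.star_eq]
    _ = p * q := by rw [star_mul, hp.star_eq, hq.star_eq]
    _ = q := hpq

namespace ContinuousLinearMap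

section Normed

variable {𝕜 E : Type*} [RCLike 𝕜] [NormedAddCommGroup E] [NormedSpace 𝕜 E]

theorem norm_pow_le_one {T : E →L[𝕜] E} (hT : ‖T‖ ≤ 1) (n : ℕ) : ‖T ^ n‖ ≤ 1 := by
  induction n with
  | zero => exact norm_id_le
  | succ n ih => exact (pow_succ T n ▸ norm_mul_le _ _).trans (mul_le_one₀ ih (norm_nonneg _) hT)

theorem exists_tendsto_pow_comp [FiniteDimensional 𝕜 E] {T : E →L[𝕜] E} (hT : ‖T‖ ≤ 1) :
    ∃ (S : E →L[𝕜] E) (φ : ℕ → ℕ), StrictMono φ ∧ Tendsto (fun k ↦ T ^ φ k) atTop (𝓝 S) := by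
  have := FiniteDimensional.proper_rclike 𝕜 (E →L[𝕜] E)
  obtain ⟨S, -, φ, hφ, hS⟩ := tendsto_subseq_of_bounded (Metric.isBounded_closedBall (x := 0))
    fun n ↦ mem_closedBall_zero_iff.2 (norm_pow_le_one hT n)
  exact ⟨S, φ, hφ, hS⟩

end Normed

variable {𝕜 E : Type*} [RCLike 𝕜] [NormedAddCommGroup E] [InnerProductSpace 𝕜 E] [CompleteSpace E]

theorem adjoint_pow (T : E →L[𝕜] E) (n : ℕ) : adjoint (T ^ n) = adjoint T ^ n := by
  simp only [← star_eq_adjoint, star_pow]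

theorem adjoint_apply_apply_eq_of_norm_apply_eq {S : E →L[𝕜] E} (hS : ‖S‖ ≤ 1) {y : E}
    (hy : ‖S y‖ = ‖y‖) : adjoint S (S y) = y := by
  have hle : ‖adjoint S (S y)‖ ≤ ‖y‖ :=
    calc ‖adjoint S (S y)‖ ≤ ‖adjoint S‖ * ‖S y‖ := le_opNorm _ _
      _ ≤ 1 * ‖y‖ := by rw [LinearIsometryEquiv.norm_map, hy]; gcongr
      _ = ‖y‖ := one_mul _
  have hinner : RCLike.re ⟪adjoint S (S y), y⟫_𝕜 = ‖y‖ ^ 2 := by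
    rw [adjoint_inner_left, ← hy, inner_self_eq_norm_sq]
  have hsq : ‖adjoint S (S y) - y‖ ^ 2 ≤ 0 := by
    rw [norm_sub_sq (𝕜 := 𝕜), hinner]
    nlinarith [norm_nonneg (adjoint S (S y))]
  exact sub_eq_zero.1 (norm_eq_zero.1 (pow_eq_zero_iff two_ne_zero |>.1
    (le_antisymm hsq (sq_nonneg _))))

theorem adjoint_mul_self_mul_self_eq_self {S : E →L[𝕜] E} (hS : ‖S‖ ≤ 1)
    (h : adjoint S * (adjoint S * S) * S = adjoint S * S) : adjoint S * S * S = S := by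
  ext x
  refine adjoint_apply_apply_eq_of_norm_apply_eq hS ?_
  have hsq : ‖S (S x)‖ ^ 2 = ‖S x‖ ^ 2 := by
    simpa only [mul_apply_eq_comp, adjoint_inner_left, inner_self_eq_norm_sq] using
      congrArg (fun B ↦ RCLike.re ⟪B x, x⟫_𝕜) h
  exact (pow_left_inj₀ (norm_nonneg _) (norm_nonneg _) two_ne_zero).1 hsq

def IsAsymptoticLimit (T A : E →L[𝕜] E) : Prop :=
  ∀ x, Tendsto (fun n : ℕ ↦ adjoint (T ^ n) ((T ^ n) x)) atTop (𝓝 (A x))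

namespace IsAsymptoticLimit

variable {T A : E →L[𝕜] E}

theorem tendsto_norm_sq (hA : IsAsymptoticLimit T A) (x : E) :
    Tendsto (fun n : ℕ ↦ ‖(T ^ n) x‖ ^ 2) atTop (𝓝 (RCLike.re ⟪A x, x⟫_𝕜)) := by
  have := ((RCLike.continuous_re (K := 𝕜)).tendsto _).comp
    ((hA x).inner (tendsto_const_nhds : Tendsto (fun _ : ℕ ↦ x) atTop (𝓝 x)))
  refine this.congr fun n ↦ ?_
  rw [Function.comp_apply, adjoint_inner_left, inner_self_eq_norm_sq]

theorem tendsto_norm_zero_iff (hA : IsAsymptoticLimit T A) (x : E) :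
    Tendsto (fun n : ℕ ↦ ‖(T ^ n) x‖) atTop (𝓝 0) ↔ RCLike.re ⟪A x, x⟫_𝕜 = 0 := by
  constructor
  · intro h
    have h2 := h.pow 2
    rw [zero_pow two_ne_zero] at h2
    exact tendsto_nhds_unique (hA.tendsto_norm_sq x) h2
  · intro h
    have h2 := (Real.continuous_sqrt.tendsto _).comp (hA.tendsto_norm_sq x)
    rw [h, Real.sqrt_zero] at h2
    exact h2.congr fun n ↦ Real.sqrt_sq (norm_nonneg _)

theorem adjoint_pow_mul_mul_pow (hA : IsAsymptoticLimit T A) (m : ℕ) :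
    adjoint (T ^ m) * A * T ^ m = A := by
  ext x
  refine tendsto_nhds_unique ?_ ((hA x).comp (tendsto_add_atTop_nat m))
  refine ((adjoint (T ^ m)).continuous.tendsto _).comp (hA ((T ^ m) x)) |>.congr fun n ↦ ?_
  simp only [Function.comp_apply, pow_add, ← star_eq_adjoint, star_mul, mul_apply_eq_comp]

variable {φ : ℕ → ℕ} {S : E →L[𝕜] E}

theorem eq_adjoint_mul_of_tendsto (hA : IsAsymptoticLimit T A) (hφ : Tendsto φ atTop atTop)
    (hS : Tendsto (fun k ↦ T ^ φ k) atTop (𝓝 S)) : A = adjoint S * S := by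
  have hlim : Tendsto (fun k ↦ adjoint (T ^ φ k) * T ^ φ k) atTop (𝓝 (adjoint S * S)) :=
    ((adjoint.continuous.tendsto S).comp hS).mul hS
  ext x
  exact tendsto_nhds_unique ((hA x).comp hφ)
    (((ContinuousLinearMap.apply 𝕜 E x).continuous.tendsto _).comp hlim)

theorem adjoint_mul_mul_eq_right_of_tendsto (hA : IsAsymptoticLimit T A)
    (hS : Tendsto (fun k ↦ T ^ φ k) atTop (𝓝 S)) : adjoint S * A * S = A := by
  have hlim : Tendsto (fun k ↦ adjoint (T ^ φ k) * A * T ^ φ k) atTop (𝓝 (adjoint S * A * S)) :=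
    (((adjoint.continuous.tendsto S).comp hS).mul tendsto_const_nhds).mul hS
  refine tendsto_nhds_unique hlim ?_
  simpa only [hA.adjoint_pow_mul_mul_pow] using tendsto_const_nhds

theorem mul_eq_right_of_tendsto (hA : IsAsymptoticLimit T A) (hT : ‖T‖ ≤ 1)
    (hφ : Tendsto φ atTop atTop) (hS : Tendsto (fun k ↦ T ^ φ k) atTop (𝓝 S)) : A * S = S := by
  have hS1 : ‖S‖ ≤ 1 := le_of_tendsto' ((continuous_norm.tendsto S).comp hS)
    fun k ↦ norm_pow_le_one hT (φ k)
  have hA_eq := hA.eq_adjoint_mul_of_tendsto hφ hS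
  have h := hA.adjoint_mul_mul_eq_right_of_tendsto hS
  rw [hA_eq] at h ⊢
  exact adjoint_mul_self_mul_self_eq_self hS1 h

end IsAsymptoticLimit

end ContinuousLinearMap

/-- For a contraction `T` on a finite-dimensional complex Hilbert space, the
asymptotic limit `A = lim T^{*n}T^n` is an orthogonal projection, coincides with
the asymptotic limit of `T^*`, and the stable subspaces of `T` and `T^*` coincide. -/
theorem stmt4 {d : ℕ} (T : EuclideanSpace ℂ (Fin d) →L[ℂ] EuclideanSpace ℂ (Fin d))
    (hT : ‖T‖ ≤ 1) (A A' : EuclideanSpace ℂ (Fin d) →L[ℂ] EuclideanSpace ℂ (Fin d))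
    (hA : ∀ x, Tendsto (fun n : ℕ => (ContinuousLinearMap.adjoint (T ^ n)) ((T ^ n) x))
      atTop (𝓝 (A x)))
    (hA' : ∀ x, Tendsto
      (fun n : ℕ => (ContinuousLinearMap.adjoint ((ContinuousLinearMap.adjoint T) ^ n))
        (((ContinuousLinearMap.adjoint T) ^ n) x)) atTop (𝓝 (A' x))) :
    A * A = A ∧ IsSelfAdjoint A ∧ A = A' ∧
      ∀ x, (Tendsto (fun n : ℕ => ‖(T ^ n) x‖) atTop (𝓝 0) ↔
        Tendsto (fun n : ℕ => ‖((ContinuousLinearMap.adjoint T) ^ n) x‖) atTop (𝓝 0)) := by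
  obtain ⟨S, φ, hφ, hS⟩ := exists_tendsto_pow_comp hT
  have hS' : Tendsto (fun k ↦ adjoint T ^ φ k) atTop (𝓝 (adjoint S)) := by
    simpa only [Function.comp_def, adjoint_pow] using (adjoint.continuous.tendsto S).comp hS
  have hT' : ‖adjoint T‖ ≤ 1 := by rwa [LinearIsometryEquiv.norm_map]
  have hA_eq : A = adjoint S * S :=
    IsAsymptoticLimit.eq_adjoint_mul_of_tendsto hA hφ.tendsto_atTop hS
  have hA'_eq : A' = S * adjoint S := by
    simpa only [adjoint_adjoint] using
      IsAsymptoticLimit.eq_adjoint_mul_of_tendsto hA' hφ.tendsto_atTop hS'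
  have hAS : A * S = S := IsAsymptoticLimit.mul_eq_right_of_tendsto hA hT hφ.tendsto_atTop hS
  have hA'S : A' * adjoint S = adjoint S :=
    IsAsymptoticLimit.mul_eq_right_of_tendsto hA' hT' hφ.tendsto_atTop hS'
  have hsa : IsSelfAdjoint A := by
    simpa only [hA_eq, star_eq_adjoint] using IsSelfAdjoint.star_mul_self S
  have hsa' : IsSelfAdjoint A' := by
    simpa only [hA'_eq, star_eq_adjoint] using IsSelfAdjoint.mul_star_self S
  have hAA' : A * A' = A' := by rw [hA'_eq, ← mul_assoc, hAS]
  have hA'A : A' * A = A := by rw [hA_eq, ← mul_assoc, hA'S]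
  obtain rfl : A = A' := hsa.eq_of_mul_eq_of_mul_eq hsa' hAA' hA'A
  refine ⟨hAA', hsa, rfl, fun x ↦ ?_⟩
  rw [IsAsymptoticLimit.tendsto_norm_zero_iff hA, IsAsymptoticLimit.tendsto_norm_zero_iff hA']
end

section
/- If T₁ and T₂ are commuting contractions on a complex Hilbert space, then the asymptotic limit of their product satisfies A_{T₁T₂} ≤ A_{T₁} and A_{T₁T₂} ≤ A_{T₂} in the positive operator order. -/
/-! On each vector, `‖(T₁T₂)ⁿ x‖ = ‖T₂ⁿ T₁ⁿ x‖ ≤ ‖T₁ⁿ x‖`, i.e. `((T₁T₂)ⁿ)* (T₁T₂)ⁿ ≤ (T₁ⁿ)* T₁ⁿ`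
for every `n`, and the Loewner order passes to strong operator limits. -/

open Filter Topology ContinuousLinearMap

namespace ContinuousLinearMap

theorem norm_pow_apply_le_of_norm_le_one {𝕜 E : Type*} [NontriviallyNormedField 𝕜]
    [SeminormedAddCommGroup E] [NormedSpace 𝕜 E] {T : E →L[𝕜] E} (hT : ‖T‖ ≤ 1) (n : ℕ)
    (x : E) : ‖(T ^ n) x‖ ≤ ‖x‖ := by
  induction n with
  | zero => simp
  | succ n ih => simpa [pow_succ'] using T.le_of_opNorm_le_of_le hT ih

theorem norm_mul_pow_apply_le_of_norm_le_one {𝕜 E : Type*} [NontriviallyNormedField 𝕜]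
    [SeminormedAddCommGroup E] [NormedSpace 𝕜 E] {S T : E →L[𝕜] E} (hS : ‖S‖ ≤ 1)
    (hST : Commute S T) (n : ℕ) (x : E) : ‖((S * T) ^ n) x‖ ≤ ‖(T ^ n) x‖ := by
  rw [hST.mul_pow, mul_apply_eq_comp]
  exact norm_pow_apply_le_of_norm_le_one hS n _

variable {𝕜 E : Type*} [RCLike 𝕜] [NormedAddCommGroup E] [InnerProductSpace 𝕜 E]

theorem IsPositive.of_tendsto_apply {ι : Type*} {l : Filter ι} [l.NeBot] {S : ι → E →L[𝕜] E}
    {A : E →L[𝕜] E} (hS : ∀ i, (S i).IsPositive) (hA : ∀ x, Tendsto (fun i ↦ S i x) l (𝓝 (A x))) :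
    A.IsPositive := by
  refine ⟨fun x y ↦ ?_, fun x ↦ ?_⟩
  · exact tendsto_nhds_unique (l := l) (((hA x).inner tendsto_const_nhds).congr
      fun i ↦ (hS i).inner_left_eq_inner_right x y) (tendsto_const_nhds.inner (hA y))
  · refine ge_of_tendsto' (x := l) ?_ fun i ↦ (hS i).re_inner_nonneg_left x
    exact (RCLike.continuous_re.tendsto _).comp ((hA x).inner tendsto_const_nhds)

theorem le_of_tendsto_apply {ι : Type*} {l : Filter ι} [l.NeBot] {S T : ι → E →L[𝕜] E}
    {A B : E →L[𝕜] E} (hST : ∀ i, S i ≤ T i) (hA : ∀ x, Tendsto (fun i ↦ S i x) l (𝓝 (A x)))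
    (hB : ∀ x, Tendsto (fun i ↦ T i x) l (𝓝 (B x))) : A ≤ B :=
  IsPositive.of_tendsto_apply hST fun x ↦ (hB x).sub (hA x)

theorem adjoint_comp_self_le_of_norm_apply_le {F : Type*} [NormedAddCommGroup F]
    [InnerProductSpace 𝕜 F] [CompleteSpace E] [CompleteSpace F] {S T : E →L[𝕜] F}
    (h : ∀ x, ‖S x‖ ≤ ‖T x‖) : adjoint S ∘L S ≤ adjoint T ∘L T := by
  refine ⟨?_, fun x ↦ ?_⟩
  · intro x y
    simp [inner_sub_left, inner_sub_right, adjoint_inner_left, adjoint_inner_right]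
  · rw [reApplyInnerSelf_apply, sub_apply, inner_sub_left, map_sub,
      ← apply_norm_sq_eq_inner_adjoint_left, ← apply_norm_sq_eq_inner_adjoint_left, sub_nonneg]
    exact pow_le_pow_left₀ (norm_nonneg _) (h x) 2

end ContinuousLinearMap

/-- If `T₁` and `T₂` are commuting contractions with asymptotic limits `A₁`, `A₂`,
and `A₁₂` is the asymptotic limit of `T₁T₂`, then `A₁₂ ≤ A₁` and `A₁₂ ≤ A₂`. -/
theorem stmt7 {H : Type*} [NormedAddCommGroup H] [InnerProductSpace ℂ H] [CompleteSpace H]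
    (T₁ T₂ : H →L[ℂ] H) (hT₁ : ‖T₁‖ ≤ 1) (hT₂ : ‖T₂‖ ≤ 1) (hcomm : T₁ * T₂ = T₂ * T₁)
    (A₁ A₂ A₁₂ : H →L[ℂ] H)
    (hA₁ : ∀ x, Tendsto (fun n : ℕ => (ContinuousLinearMap.adjoint (T₁ ^ n)) ((T₁ ^ n) x))
      atTop (𝓝 (A₁ x)))
    (hA₂ : ∀ x, Tendsto (fun n : ℕ => (ContinuousLinearMap.adjoint (T₂ ^ n)) ((T₂ ^ n) x))
      atTop (𝓝 (A₂ x)))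
    (hA₁₂ : ∀ x, Tendsto
      (fun n : ℕ => (ContinuousLinearMap.adjoint ((T₁ * T₂) ^ n)) (((T₁ * T₂) ^ n) x))
      atTop (𝓝 (A₁₂ x))) :
    (A₁ - A₁₂).IsPositive ∧ (A₂ - A₁₂).IsPositive := by
  have hle : ∀ {T S : H →L[ℂ] H}, ‖S‖ ≤ 1 → Commute S T → ∀ n,
      adjoint ((S * T) ^ n) ∘L (S * T) ^ n ≤ adjoint (T ^ n) ∘L T ^ n :=
    fun hS hST n ↦ adjoint_comp_self_le_of_norm_apply_le
      (norm_mul_pow_apply_le_of_norm_le_one hS hST n)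
  constructor
  · rw [hcomm] at hA₁₂
    exact le_of_tendsto_apply (hle hT₂ (Commute.symm hcomm)) hA₁₂ hA₁
  · exact le_of_tendsto_apply (hle hT₁ hcomm) hA₁₂ hA₂
end

section
/- If T₁, T₂ are commuting contractions with equal asymptotic limits A_{T₁} = A_{T₂}, then A_{T₁T₂} = A_{T₁} = A_{T₂}. -/
/-!
For a contraction `T`, the sequence `‖Tⁿ x‖²` is antitone, so it converges to its infimum
`q_T x`, and `⟪A_T x, x⟫ = q_T x`. Since `q_{T₂}` is invariant under `T₂` and `q_{T₁} = q_{T₂}`,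
`q_{T₂} x = q_{T₁} (T₂ⁿ x) ≤ ‖T₁ⁿ T₂ⁿ x‖² ≤ ‖T₂ⁿ x‖² → q_{T₂} x`, so `‖(T₁T₂)ⁿ x‖² → q_{T₂} x`.
Hence `A_{T₁T₂}` and `A_{T₂}` have the same quadratic form, and over `ℂ` this forces equality.
-/

open Filter Topology ContinuousLinearMap

lemma norm_mul_le_one_of_le_one {R : Type*} [SeminormedRing R] {a b : R} (ha : ‖a‖ ≤ 1)
    (hb : ‖b‖ ≤ 1) : ‖a * b‖ ≤ 1 :=
  (norm_mul_le a b).trans (mul_le_one₀ ha (norm_nonneg b) hb)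

section Contraction

variable {𝕜 E : Type*} [NontriviallyNormedField 𝕜] [SeminormedAddCommGroup E] [NormedSpace 𝕜 E]
  {T : E →L[𝕜] E}

lemma antitone_norm_pow_apply_sq (hT : ‖T‖ ≤ 1) (x : E) :
    Antitone fun n : ℕ => ‖(T ^ n) x‖ ^ 2 := by
  have hnorm : Antitone fun n : ℕ => ‖(T ^ n) x‖ := antitone_nat_of_succ_le fun n => by
    rw [pow_succ', mul_apply_eq_comp]
    simpa using T.le_of_opNorm_le hT ((T ^ n) x)
  exact fun m n hmn => pow_le_pow_left₀ (norm_nonneg _) (hnorm hmn) 2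

lemma norm_pow_apply_sq_le (hT : ‖T‖ ≤ 1) (x : E) (n : ℕ) : ‖(T ^ n) x‖ ^ 2 ≤ ‖x‖ ^ 2 := by
  simpa using antitone_norm_pow_apply_sq hT x (Nat.zero_le n)

variable (T) in
noncomputable def asymptoticNormSq (x : E) : ℝ := ⨅ n : ℕ, ‖(T ^ n) x‖ ^ 2

lemma bddBelow_range_norm_pow_apply_sq (x : E) :
    BddBelow (Set.range fun n : ℕ => ‖(T ^ n) x‖ ^ 2) :=
  ⟨0, by rintro _ ⟨n, rfl⟩; positivity⟩

lemma asymptoticNormSq_le (x : E) (n : ℕ) : asymptoticNormSq T x ≤ ‖(T ^ n) x‖ ^ 2 :=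
  ciInf_le (bddBelow_range_norm_pow_apply_sq x) n

lemma tendsto_asymptoticNormSq (hT : ‖T‖ ≤ 1) (x : E) :
    Tendsto (fun n : ℕ => ‖(T ^ n) x‖ ^ 2) atTop (𝓝 (asymptoticNormSq T x)) :=
  tendsto_atTop_ciInf (antitone_norm_pow_apply_sq hT x) (bddBelow_range_norm_pow_apply_sq x)

lemma asymptoticNormSq_pow_apply (hT : ‖T‖ ≤ 1) (x : E) (n : ℕ) :
    asymptoticNormSq T ((T ^ n) x) = asymptoticNormSq T x := by
  refine tendsto_nhds_unique (tendsto_asymptoticNormSq hT _) ?_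
  simpa only [Function.comp_def, pow_add, mul_apply_eq_comp] using
    (tendsto_asymptoticNormSq hT x).comp (tendsto_add_atTop_nat n)

lemma asymptoticNormSq_mul_of_commute {T₁ T₂ : E →L[𝕜] E} (hT₁ : ‖T₁‖ ≤ 1) (hT₂ : ‖T₂‖ ≤ 1)
    (hcomm : Commute T₁ T₂) (hq : asymptoticNormSq T₁ = asymptoticNormSq T₂) :
    asymptoticNormSq (T₁ * T₂) = asymptoticNormSq T₂ := by
  funext x
  have hpow (n : ℕ) : ((T₁ * T₂) ^ n) x = (T₁ ^ n) ((T₂ ^ n) x) := by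
    rw [hcomm.mul_pow, mul_apply_eq_comp]
  have hlower (n : ℕ) : asymptoticNormSq T₂ x ≤ ‖((T₁ * T₂) ^ n) x‖ ^ 2 := by
    rw [hpow, ← asymptoticNormSq_pow_apply hT₂ x n, ← hq]
    exact asymptoticNormSq_le _ n
  have hupper (n : ℕ) : ‖((T₁ * T₂) ^ n) x‖ ^ 2 ≤ ‖(T₂ ^ n) x‖ ^ 2 := by
    rw [hpow]
    exact norm_pow_apply_sq_le hT₁ _ n
  exact tendsto_nhds_unique (tendsto_asymptoticNormSq (norm_mul_le_one_of_le_one hT₁ hT₂) x)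
    (tendsto_of_tendsto_of_tendsto_of_le_of_le tendsto_const_nhds
      (tendsto_asymptoticNormSq hT₂ x) hlower hupper)

end Contraction

lemma inner_apply_self_eq_asymptoticNormSq {𝕜 H : Type*} [RCLike 𝕜] [NormedAddCommGroup H]
    [InnerProductSpace 𝕜 H] [CompleteSpace H] {T A : H →L[𝕜] H} (hT : ‖T‖ ≤ 1)
    (hA : ∀ x, Tendsto (fun n : ℕ => adjoint (T ^ n) ((T ^ n) x)) atTop (𝓝 (A x))) (x : H) :
    inner 𝕜 (A x) x = (asymptoticNormSq T x : 𝕜) := by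
  refine tendsto_nhds_unique ((hA x).inner tendsto_const_nhds) ?_
  simpa [adjoint_inner_left, inner_self_eq_norm_sq_to_K, Function.comp_def] using
    ((RCLike.continuous_ofReal (K := 𝕜)).tendsto _).comp (tendsto_asymptoticNormSq hT x)

/-- If `T₁`, `T₂` are commuting contractions with equal asymptotic limits
`A₁ = A₂`, then the asymptotic limit of `T₁T₂` equals them: `A₁₂ = A₁ = A₂`. -/
theorem stmt8 {H : Type*} [NormedAddCommGroup H] [InnerProductSpace ℂ H] [CompleteSpace H]
    (T₁ T₂ : H →L[ℂ] H) (hT₁ : ‖T₁‖ ≤ 1) (hT₂ : ‖T₂‖ ≤ 1) (hcomm : T₁ * T₂ = T₂ * T₁)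
    (A₁ A₂ A₁₂ : H →L[ℂ] H)
    (hA₁ : ∀ x, Tendsto (fun n : ℕ => (ContinuousLinearMap.adjoint (T₁ ^ n)) ((T₁ ^ n) x))
      atTop (𝓝 (A₁ x)))
    (hA₂ : ∀ x, Tendsto (fun n : ℕ => (ContinuousLinearMap.adjoint (T₂ ^ n)) ((T₂ ^ n) x))
      atTop (𝓝 (A₂ x)))
    (hA₁₂ : ∀ x, Tendsto
      (fun n : ℕ => (ContinuousLinearMap.adjoint ((T₁ * T₂) ^ n)) (((T₁ * T₂) ^ n) x))
      atTop (𝓝 (A₁₂ x)))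
    (heq : A₁ = A₂) :
    A₁₂ = A₁ ∧ A₁₂ = A₂ := by
  have hq : asymptoticNormSq T₁ = asymptoticNormSq T₂ := funext fun x => by
    have := inner_apply_self_eq_asymptoticNormSq hT₁ hA₁ x
    rwa [heq, inner_apply_self_eq_asymptoticNormSq hT₂ hA₂ x, RCLike.ofReal_inj, eq_comm] at this
  have hmul : asymptoticNormSq (T₁ * T₂) = asymptoticNormSq T₂ :=
    asymptoticNormSq_mul_of_commute hT₁ hT₂ hcomm hq
  have key : A₁₂ = A₂ := coe_injective <| (ext_inner_map _ _).mp fun x => by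
    simp only [coe_coe,
      inner_apply_self_eq_asymptoticNormSq (norm_mul_le_one_of_le_one hT₁ hT₂) hA₁₂,
      inner_apply_self_eq_asymptoticNormSq hT₂ hA₂, hmul]
  exact ⟨key.trans heq.symm, key⟩
end

section
/- If T ∈ B(ℂ^d) is power bounded, then the Cesàro means (1/n) Σ_{j=1}^n T^{*j}T^j converge (in norm) as n → ∞; conversely, if for some matrix T this sequence of Cesàro means converges, then T is power bounded. -/
/-!
If `T` is power bounded, the congruence `X ↦ Tᴴ X T` has bounded orbits. In finite dimension a
linear map `f` with bounded orbits splits the space as `ker (f - 1) ⊕ range (f - 1)`: its Birkhoff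
averages are constant on the first summand and telescope to `0` on the second, so they converge.
The Cesàro means in question are the Birkhoff averages of `Tᴴ T` under this congruence.

Conversely, the trace of the `n`-th Cesàro mean is the average of `‖T ^ k‖²` over `1 ≤ k ≤ n`
(Frobenius norm). Since `‖T ^ N‖ ≤ ‖T ^ k‖ ‖T ^ (N - k)‖ ≤ (‖T ^ k‖² + ‖T ^ (N - k)‖²) / 2`,
averaging over `k` bounds `‖T ^ N‖` by the Cesàro means, which are bounded when they converge.
-/

open Filter Topology Matrix

/- Matrices carry the Frobenius norm: it is submultiplicative, invariant under `ᴴ`, and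
`‖A‖² = re (trace (Aᴴ A))`. -/
attribute [local instance] frobeniusNormedAddCommGroup frobeniusNormedSpace

namespace LinearMap

variable {𝕜 E : Type*} [RCLike 𝕜] [NormedAddCommGroup E] [NormedSpace 𝕜 E] (f : E →ₗ[𝕜] E)

theorem birkhoffAverage_id_eq (n : ℕ) :
    birkhoffAverage 𝕜 (⇑f) _root_.id n = ⇑((n : 𝕜)⁻¹ • ∑ k ∈ Finset.range n, f ^ k) := by
  ext x
  simp [birkhoffAverage, birkhoffSum, LinearMap.sum_apply, Module.End.pow_apply]

theorem tendsto_birkhoffAverage_apply_sub_self {x : E}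
    (hx : Bornology.IsBounded (Set.range fun n => f^[n] x)) :
    Tendsto (birkhoffAverage 𝕜 (⇑f) _root_.id · (f x - x)) atTop (𝓝 0) := by
  simpa [birkhoffAverage_id_eq, map_sub] using
    tendsto_birkhoffAverage_apply_sub_birkhoffAverage 𝕜 (g := _root_.id) hx

/-- The Birkhoff averages of a fixed vector `(f - 1) x` are both constant and tending to `0`. -/
theorem disjoint_ker_sub_one_range_sub_one
    (hf : ∀ x, Bornology.IsBounded (Set.range fun n => f^[n] x)) :
    Disjoint (ker (f - 1)) (range (f - 1)) := by
  rw [Submodule.disjoint_def]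
  rintro _ hfix ⟨x, rfl⟩
  have hfix : Function.IsFixedPt f ((f - 1) x) := by
    simpa [Function.IsFixedPt, sub_eq_zero] using hfix
  exact tendsto_nhds_unique (hfix.tendsto_birkhoffAverage 𝕜 _root_.id)
    (by simpa using f.tendsto_birkhoffAverage_apply_sub_self (hf x))

theorem exists_tendsto_birkhoffAverage [FiniteDimensional 𝕜 E]
    (hf : ∀ x, Bornology.IsBounded (Set.range fun n => f^[n] x)) (x : E) :
    ∃ y, Tendsto (birkhoffAverage 𝕜 (⇑f) _root_.id · x) atTop (𝓝 y) := by
  have hcompl : IsCompl (ker (f - 1)) (range (f - 1)) :=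
    (Submodule.isCompl_iff_disjoint _ _
      (by rw [add_comm, (f - 1).finrank_range_add_finrank_ker])).2
        (f.disjoint_ker_sub_one_range_sub_one hf)
  obtain ⟨y, hy, _, ⟨z, rfl⟩, rfl⟩ :=
    Submodule.mem_sup.1 (hcompl.sup_eq_top ▸ Submodule.mem_top (x := x))
  have hy : Function.IsFixedPt f y := by simpa [Function.IsFixedPt, sub_eq_zero] using hy
  refine ⟨y, ?_⟩
  simpa only [birkhoffAverage_id_eq, sub_apply, Module.End.one_apply, id_eq, map_add, add_zero]
    using (hy.tendsto_birkhoffAverage 𝕜 _root_.id).add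
      (f.tendsto_birkhoffAverage_apply_sub_self (hf z))

end LinearMap

/-- Pair `b (k + 1)` with `b (N - 1 - k)`: `b N ≤ b (k + 1) b (N - 1 - k)` is at most the mean of
their squares. -/
theorem le_of_submultiplicative_of_sum_sq_le {b : ℕ → ℝ} {C : ℝ}
    (hmul : ∀ p q, b (p + q) ≤ b p * b q)
    (hsum : ∀ m, ∑ k ∈ Finset.range m, b (k + 1) ^ 2 ≤ C * m) {N : ℕ} (hN : 2 ≤ N) :
    b N ≤ C := by
  obtain ⟨m, rfl⟩ : ∃ m, N = m + 1 := ⟨N - 1, by omega⟩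
  have hm : (0 : ℝ) < m := by exact_mod_cast (by omega : 0 < m)
  have hpair : ∀ k ∈ Finset.range m, 2 * b (m + 1) ≤ b (k + 1) ^ 2 + b (m - k) ^ 2 := by
    intro k hk
    have h := hmul (k + 1) (m - k)
    rw [show k + 1 + (m - k) = m + 1 by grind] at h
    nlinarith [sq_nonneg (b (k + 1) - b (m - k))]
  have hreflect : ∑ k ∈ Finset.range m, b (m - k) ^ 2 = ∑ k ∈ Finset.range m, b (k + 1) ^ 2 := by
    rw [← Finset.sum_range_reflect]
    exact Finset.sum_congr rfl fun k hk => by grind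
  have h := Finset.sum_le_sum hpair
  rw [Finset.sum_add_distrib, hreflect, Finset.sum_const, Finset.card_range, nsmul_eq_mul] at h
  nlinarith [hsum m]

namespace Matrix

section Frobenius

variable {m n α : Type*} [Fintype m] [Fintype n]

/-- The Frobenius norm has the product bornology, so boundedness is entrywise. -/
theorem isBounded_range_iff [NormedAddCommGroup α] {ι : Type*} {f : ι → Matrix m n α} :
    Bornology.IsBounded (Set.range f) ↔ ∃ M, ∀ k i j, ‖f k i j‖ ≤ M := by
  let : SeminormedAddCommGroup (Matrix m n α) := Matrix.seminormedAddCommGroup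
  simp only [isBounded_iff_forall_norm_le, Set.forall_mem_range]
  refine ⟨fun ⟨M, hM⟩ => ⟨M, fun k i j => (norm_entry_le_entrywise_sup_norm _).trans (hM k)⟩,
    fun ⟨M, hM⟩ => ⟨max M 0, fun k => (norm_le_iff (le_max_right _ _)).2 fun i j =>
      (hM k i j).trans (le_max_left _ _)⟩⟩

theorem re_trace_conjTranspose_mul_self {𝕜 : Type*} [RCLike 𝕜] (A : Matrix m n 𝕜) :
    RCLike.re (Aᴴ * A).trace = ‖A‖ ^ 2 := by
  have hsq : ‖A‖ ^ 2 = ∑ i, ∑ j, ‖A i j‖ ^ 2 := by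
    rw [frobenius_norm_def, ← Real.rpow_natCast, ← Real.rpow_mul (by positivity)]
    norm_num
  simp only [trace, diag, mul_apply, conjTranspose_apply, RCLike.star_def, RCLike.conj_mul,
    map_sum, ← RCLike.ofReal_pow, RCLike.ofReal_re, hsq]
  exact Finset.sum_comm

end Frobenius

variable {n 𝕜 : Type*} [Fintype n] [DecidableEq n] [RCLike 𝕜]

def congruence (T : Matrix n n 𝕜) : Matrix n n 𝕜 →ₗ[𝕜] Matrix n n 𝕜 :=
  LinearMap.mulLeft 𝕜 Tᴴ ∘ₗ LinearMap.mulRight 𝕜 T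

theorem congruence_iterate (T X : Matrix n n 𝕜) (k : ℕ) :
    (congruence T)^[k] X = (T ^ k)ᴴ * X * T ^ k := by
  induction k with
  | zero => simp
  | succ k ih =>
    rw [Function.iterate_succ_apply', ih, pow_succ, conjTranspose_mul]
    simp [congruence, mul_assoc]

theorem birkhoffAverage_congruence (T : Matrix n n 𝕜) (N : ℕ) :
    birkhoffAverage 𝕜 (congruence T) id N (congruence T 1) =
      (N : 𝕜)⁻¹ • ∑ k ∈ Finset.range N, (T ^ (k + 1))ᴴ * T ^ (k + 1) := by
  simp [birkhoffAverage, birkhoffSum, ← Function.iterate_succ_apply, congruence_iterate]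

theorem isBounded_congruence_orbit {T : Matrix n n 𝕜}
    (hT : Bornology.IsBounded (Set.range (T ^ ·))) (X : Matrix n n 𝕜) :
    Bornology.IsBounded (Set.range fun k => (congruence T)^[k] X) := by
  obtain ⟨R, hR⟩ := isBounded_iff_forall_norm_le.1 hT
  rw [Set.forall_mem_range] at hR
  refine isBounded_iff_forall_norm_le.2 ⟨R * ‖X‖ * R, Set.forall_mem_range.2 fun k => ?_⟩
  rw [congruence_iterate]
  calc ‖(T ^ k)ᴴ * X * T ^ k‖ ≤ ‖T ^ k‖ * ‖X‖ * ‖T ^ k‖ := by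
        grw [frobenius_norm_mul, frobenius_norm_mul, frobenius_norm_conjTranspose]
    _ ≤ R * ‖X‖ * R := by
        have hR0 : 0 ≤ R := (norm_nonneg _).trans (hR 0)
        gcongr
        all_goals exact hR k

theorem isBounded_range_pow_of_tendsto {T A : Matrix n n 𝕜}
    (h : Tendsto (fun N : ℕ => (N : 𝕜)⁻¹ • ∑ k ∈ Finset.range N, (T ^ (k + 1))ᴴ * T ^ (k + 1))
      atTop (𝓝 A)) :
    Bornology.IsBounded (Set.range (T ^ ·)) := by
  have htrace : Tendsto (fun N : ℕ => (N : ℝ)⁻¹ * ∑ k ∈ Finset.range N, ‖T ^ (k + 1)‖ ^ 2)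
      atTop (𝓝 (RCLike.re A.trace)) := by
    refine (((RCLike.continuous_re.comp continuous_id.matrix_trace).tendsto A).comp h).congr
      fun N => ?_
    simp only [Function.comp_apply, id_eq, inv_natCast_smul_eq 𝕜 ℝ, trace_smul, RCLike.smul_re,
      trace_sum, map_sum, re_trace_conjTranspose_mul_self]
  obtain ⟨C, hC⟩ := htrace.bddAbove_range
  have hsum : ∀ N : ℕ, ∑ k ∈ Finset.range N, ‖T ^ (k + 1)‖ ^ 2 ≤ C * N := by
    intro N
    rcases N.eq_zero_or_pos with rfl | hN
    · simp
    · rw [mul_comm, ← inv_mul_le_iff₀ (Nat.cast_pos.2 hN)]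
      exact hC ⟨N, rfl⟩
  have hle : ∀ N, 2 ≤ N → ‖T ^ N‖ ≤ C := fun N hN =>
    le_of_submultiplicative_of_sum_sq_le (b := fun k => ‖T ^ k‖)
      (fun p q => by simpa only [pow_add] using frobenius_norm_mul _ _) hsum hN
  obtain ⟨R, hR⟩ := (isBoundedUnder_of_eventually_le (eventually_atTop.2 ⟨2, hle⟩)).bddAbove_range
  exact isBounded_iff_forall_norm_le.2 ⟨R, Set.forall_mem_range.2 fun N => hR ⟨N, rfl⟩⟩

end Matrix

/-- A matrix `T` is power bounded iff the Cesàro means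
`(1/n) ∑_{j=1}^n T^{*j} T^j` converge (entrywise) as `n → ∞`. -/
theorem stmt11 {d : ℕ} (T : Matrix (Fin d) (Fin d) ℂ) :
    (∃ M : ℝ, ∀ (n : ℕ) (i j : Fin d), ‖(T ^ n) i j‖ ≤ M) ↔
      (∃ A : Matrix (Fin d) (Fin d) ℂ, ∀ i j : Fin d,
        Tendsto (fun n : ℕ =>
          (((n : ℂ)⁻¹ •
            ∑ k ∈ Finset.range n, ((T ^ (k + 1)).conjTranspose * T ^ (k + 1))) i j))
          atTop (𝓝 (A i j))) := by
  rw [← Matrix.isBounded_range_iff (f := (T ^ ·))]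
  constructor
  · intro hT
    obtain ⟨A, hA⟩ := (Matrix.congruence T).exists_tendsto_birkhoffAverage
      (Matrix.isBounded_congruence_orbit hT) (Matrix.congruence T 1)
    simp only [Matrix.birkhoffAverage_congruence] at hA
    exact ⟨A, fun i j => tendsto_pi_nhds.1 (tendsto_pi_nhds.1 hA i) j⟩
  · rintro ⟨A, hA⟩
    exact Matrix.isBounded_range_pow_of_tendsto
      (tendsto_pi_nhds.2 fun i => tendsto_pi_nhds.2 (hA i))
end

section
/- A positive definite matrix A ∈ B(ℂ^d) is the Cesàro asymptotic limit of a power bounded matrix of class C₁₁ (equivalently, one similar to a unitary) if and only if the eigenvalues t₁,…,t_d > 0 of A (with multiplicity) satisfy 1/t₁ + ⋯ + 1/t_d = d, equivalently tr(A^{-1}) = d. -/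
open Filter Topology
open scoped ComplexOrder

open Finset Matrix

/-!
If the Cesàro means of `(T ^ k)ᴴ * T ^ k` converge to `A`, shifting the sum by one index gives
`Tᴴ * A * T = A`. Then `T ^ k * A⁻¹ * (T ^ k)ᴴ = A⁻¹`, so `trace (A⁻¹ * ((T ^ k)ᴴ * T ^ k))`
equals `trace A⁻¹` for every `k`; averaging and passing to the limit gives
`trace A⁻¹ = trace (A⁻¹ * A) = d`.

Conversely, rescaling an orthonormal eigenbasis of `A` gives `S` with `Sᴴ * A * S = 1` and
`Sᴴ * S` diagonal. With `P` the cyclic shift of coordinates, `T = S * P * S⁻¹` satisfies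
`T ^ d = 1`, so it is power bounded and `(T ^ k)ᴴ * T ^ k` is `d`-periodic in `k`. Its Cesàro
means therefore converge to the average over one period, and conjugating the diagonal matrix
`Sᴴ * S` by all powers of `P` averages its entries: the limit is
`(trace (Sᴴ * S) / d) • (S⁻¹)ᴴ * S⁻¹ = (trace A⁻¹ / d) • A`.
-/

theorem Function.Periodic.tendsto_inv_smul_sum_range {𝕜 E : Type*} [RCLike 𝕜]
    [NormedAddCommGroup E] [NormedSpace 𝕜 E] {h : ℕ → E} {p : ℕ}
    (hh : Function.Periodic h p) (hp : 0 < p) :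
    Tendsto (fun N : ℕ => (N : 𝕜)⁻¹ • ∑ k ∈ range N, h k) atTop
      (𝓝 ((p : 𝕜)⁻¹ • ∑ k ∈ range p, h k)) := by
  set c := (p : 𝕜)⁻¹ • ∑ k ∈ range p, h k
  have hpc : (p : 𝕜) • c = ∑ k ∈ range p, h k := by
    rw [smul_inv_smul₀ (Nat.cast_ne_zero.mpr hp.ne')]
  -- the deviation of the partial sums from their linear growth is periodic, hence bounded
  set G : ℕ → E := fun N => ∑ k ∈ range N, h k - (N : 𝕜) • c
  have hG : Function.Periodic G p := fun N => by
    have hshift : ∀ k, h (p + k) = h k := fun k => by rw [add_comm]; exact hh k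
    simp only [G, add_comm N p, sum_range_add, hshift, Nat.cast_add, add_smul, hpc]
    abel
  have hGbdd : IsBoundedUnder (· ≤ ·) atTop (norm ∘ G) := by
    refine isBoundedUnder_of ⟨∑ r ∈ range p, ‖G r‖, fun N => ?_⟩
    rw [Function.comp_apply, ← hG.map_mod_nat N]
    exact single_le_sum (f := fun r => ‖G r‖) (fun _ _ => norm_nonneg _)
      (mem_range.mpr (Nat.mod_lt N hp))
  have hmean : ∀ᶠ N : ℕ in atTop, c + (N : 𝕜)⁻¹ • G N = (N : 𝕜)⁻¹ • ∑ k ∈ range N, h k := by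
    filter_upwards [eventually_ne_atTop 0] with N hN
    simp only [G, smul_sub, inv_smul_smul₀ (Nat.cast_ne_zero.mpr hN : (N : 𝕜) ≠ 0)]
    abel
  simpa using (tendsto_const_nhds (x := c)).add
    (tendsto_inv_atTop_nhds_zero_nat.zero_smul_isBoundedUnder_le hGbdd) |>.congr' hmean

namespace Matrix

variable {𝕜 n : Type*} [RCLike 𝕜] [Fintype n] [DecidableEq n]

noncomputable def cesaroMean (T : Matrix n n 𝕜) (N : ℕ) : Matrix n n 𝕜 :=
  (N : 𝕜)⁻¹ • ∑ k ∈ range N, (T ^ (k + 1))ᴴ * T ^ (k + 1)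

lemma conjTranspose_mul_cesaroMean_mul {T : Matrix n n 𝕜} {N : ℕ} (hN : N ≠ 0) :
    Tᴴ * cesaroMean T N * T =
      cesaroMean T (N + 1) + (N : 𝕜)⁻¹ • (cesaroMean T (N + 1) - Tᴴ * T) := by
  have hsum : Tᴴ * (∑ k ∈ range N, (T ^ (k + 1))ᴴ * T ^ (k + 1)) * T + Tᴴ * T =
      ∑ k ∈ range (N + 1), (T ^ (k + 1))ᴴ * T ^ (k + 1) := by
    rw [sum_range_succ', Matrix.mul_sum, Matrix.sum_mul]
    simp only [pow_succ, pow_zero, conjTranspose_mul, Matrix.one_mul, Matrix.mul_assoc]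
  rw [cesaroMean, cesaroMean, Matrix.mul_smul, Matrix.smul_mul, ← hsum]
  match_scalars
  · field_simp
  · field_simp
    ring

lemma conjTranspose_mul_mul_eq_of_tendsto_cesaroMean {T A : Matrix n n 𝕜}
    (hT : Tendsto (cesaroMean T) atTop (𝓝 A)) : Tᴴ * A * T = A := by
  have hshift : Tendsto (fun N => cesaroMean T (N + 1)) atTop (𝓝 A) :=
    (tendsto_add_atTop_iff_nat 1).mpr hT
  have hrhs := hshift.add ((tendsto_inv_atTop_nhds_zero_nat (𝕜 := 𝕜)).smul
    (hshift.sub_const (Tᴴ * T)))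
  rw [zero_smul, add_zero] at hrhs
  refine tendsto_nhds_unique ((tendsto_const_nhds.mul hT).mul_const T) (hrhs.congr' ?_)
  filter_upwards [eventually_ne_atTop 0] with N hN
  exact (conjTranspose_mul_cesaroMean_mul hN).symm

lemma conjTranspose_pow_mul_mul_pow {T A : Matrix n n 𝕜} (h : Tᴴ * A * T = A) (k : ℕ) :
    (T ^ k)ᴴ * A * T ^ k = A := by
  induction k with
  | zero => simp
  | succ k ih =>
    rw [pow_succ, conjTranspose_mul]
    calc Tᴴ * (T ^ k)ᴴ * A * (T ^ k * T) = Tᴴ * ((T ^ k)ᴴ * A * T ^ k) * T := by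
          simp only [Matrix.mul_assoc]
      _ = A := by rw [ih, h]

lemma trace_inv_mul_conjTranspose_mul_self {X A : Matrix n n 𝕜} (hA : IsUnit A.det)
    (h : Xᴴ * A * X = A) : trace (A⁻¹ * (Xᴴ * X)) = trace A⁻¹ := by
  have hleft : (A⁻¹ * Xᴴ * A) * X = 1 := by
    simp only [Matrix.mul_assoc] at h ⊢
    rw [h, nonsing_inv_mul _ hA]
  have hright : X * (A⁻¹ * Xᴴ) = A⁻¹ := by
    calc X * (A⁻¹ * Xᴴ) = X * (A⁻¹ * Xᴴ * A) * A⁻¹ := by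
          simp only [Matrix.mul_assoc, mul_nonsing_inv _ hA, Matrix.mul_one]
      _ = A⁻¹ := by rw [mul_eq_one_comm.mp hleft, Matrix.one_mul]
  rw [← Matrix.mul_assoc, trace_mul_comm, hright]

theorem trace_inv_eq_card_of_tendsto_cesaroMean {T A : Matrix n n 𝕜} (hA : IsUnit A.det)
    (hT : Tendsto (cesaroMean T) atTop (𝓝 A)) : trace A⁻¹ = Fintype.card n := by
  have hinv := conjTranspose_pow_mul_mul_pow (conjTranspose_mul_mul_eq_of_tendsto_cesaroMean hT)
  have hconst : ∀ N ≠ 0, trace (A⁻¹ * cesaroMean T N) = trace A⁻¹ := fun N hN => by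
    simp only [cesaroMean, Matrix.mul_smul, Matrix.mul_sum, trace_smul, trace_sum,
      trace_inv_mul_conjTranspose_mul_self hA (hinv _), sum_const, card_range, nsmul_eq_mul,
      smul_eq_mul, inv_mul_cancel_left₀ (Nat.cast_ne_zero.mpr hN : (N : 𝕜) ≠ 0)]
  have hlim : Tendsto (fun N => trace (A⁻¹ * cesaroMean T N)) atTop (𝓝 (trace (A⁻¹ * A))) :=
    (continuous_id.matrix_trace.tendsto _).comp (tendsto_const_nhds.mul hT)
  rw [nonsing_inv_mul _ hA, trace_one] at hlim
  exact tendsto_nhds_unique (tendsto_const_nhds.congr' <|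
    (eventually_ne_atTop 0).mono fun N hN => (hconst N hN).symm) hlim

lemma PosDef.exists_conjTranspose_mul_mul_eq_one_and_isDiag {A : Matrix n n 𝕜} (hA : A.PosDef) :
    ∃ S : Matrix n n 𝕜, Sᴴ * A * S = 1 ∧ (Sᴴ * S).IsDiag := by
  set V : Matrix n n 𝕜 := (hA.1.eigenvectorUnitary : Matrix n n 𝕜)
  set t := hA.1.eigenvalues
  set s : n → 𝕜 := fun i => ((Real.sqrt (t i))⁻¹ : ℝ)
  have hscale : ∀ i, (Real.sqrt (t i))⁻¹ * t i * (Real.sqrt (t i))⁻¹ = 1 := fun i => by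
    have ht := hA.eigenvalues_pos i
    rw [mul_comm, ← mul_assoc, ← mul_inv, Real.mul_self_sqrt ht.le, inv_mul_cancel₀ ht.ne']
  have hV : Vᴴ * V = 1 := Unitary.coe_star_mul_self hA.1.eigenvectorUnitary
  have hVAV : Vᴴ * A * V = diagonal (RCLike.ofReal ∘ t) := by
    have := hA.1.conjStarAlgAut_star_eigenvectorUnitary
    rwa [Unitary.conjStarAlgAut_star_apply, star_eq_conjTranspose] at this
  refine ⟨V * diagonal s, ?_, ?_⟩
  · calc (V * diagonal s)ᴴ * A * (V * diagonal s)
          = diagonal (star s) * (Vᴴ * A * V) * diagonal s := by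
          simp [conjTranspose_mul, Matrix.mul_assoc]
      _ = 1 := by
          rw [hVAV, diagonal_mul_diagonal, diagonal_mul_diagonal, ← diagonal_one]
          congr 1
          ext i
          simp only [s, Pi.star_apply, Function.comp_apply, RCLike.star_def,
            RCLike.conj_ofReal, ← RCLike.ofReal_mul, hscale, RCLike.ofReal_one]
  · rw [conjTranspose_mul, diagonal_conjTranspose, Matrix.mul_assoc, ← Matrix.mul_assoc Vᴴ, hV,
      Matrix.one_mul, diagonal_mul_diagonal]
    exact isDiag_diagonal _

open scoped Matrix.Norms.Elementwise in
lemma exists_norm_pow_apply_le_of_pow_eq_one {T : Matrix n n 𝕜} {p : ℕ} (hp : 0 < p)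
    (hT : T ^ p = 1) : ∃ M : ℝ, ∀ (k : ℕ) (i j : n), ‖(T ^ k) i j‖ ≤ M := by
  refine ⟨∑ r ∈ range p, ‖T ^ r‖, fun k i j => ?_⟩
  rw [pow_eq_pow_mod k hT]
  exact (norm_entry_le_entrywise_sup_norm _).trans <|
    single_le_sum (f := fun r => ‖T ^ r‖) (fun _ _ => norm_nonneg _) (mem_range.mpr (k.mod_lt hp))

lemma mul_mul_nonsing_inv_pow {S : Matrix n n 𝕜} (hS : IsUnit S.det) (U : Matrix n n 𝕜) (k : ℕ) :
    (S * U * S⁻¹) ^ k = S * U ^ k * S⁻¹ := by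
  simpa using Units.conj_pow ((isUnit_iff_isUnit_det S).mpr hS).unit U k

lemma permMatrix_pow {R : Type*} [Semiring R] (σ : Equiv.Perm n) (k : ℕ) :
    σ.permMatrix R ^ k = (σ ^ k).permMatrix R := by
  induction k with
  | zero => simp
  | succ k ih => rw [pow_succ', ih, pow_succ, permMatrix_mul]

lemma conjTranspose_permMatrix_mul_diagonal_mul_permMatrix (σ : Equiv.Perm n) (x : n → 𝕜) :
    (σ.permMatrix 𝕜)ᴴ * diagonal x * σ.permMatrix 𝕜 = diagonal (x ∘ σ.symm) := by
  rw [conjTranspose_permMatrix, PEquiv.toMatrix_toPEquiv_mul, PEquiv.mul_toMatrix_toPEquiv,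
    submatrix_submatrix, Function.comp_id, Function.id_comp, Equiv.Perm.inv_def,
    submatrix_diagonal_equiv]

variable {d : ℕ} [NeZero d]

open Fin.NatCast in
lemma addRight_one_permMatrix_pow_card : (Equiv.addRight (1 : Fin d)).permMatrix 𝕜 ^ d = 1 := by
  simp [permMatrix_pow, Equiv.nsmul_addRight, nsmul_one]

open Fin.NatCast in
lemma sum_conjTranspose_pow_mul_diagonal_mul_pow_addRight_one (x : Fin d → 𝕜) :
    ∑ k ∈ range d, ((Equiv.addRight (1 : Fin d)).permMatrix 𝕜 ^ (k + 1))ᴴ * diagonal x *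
      (Equiv.addRight (1 : Fin d)).permMatrix 𝕜 ^ (k + 1) = (∑ i, x i) • 1 := by
  rw [sum_congr rfl fun k _ => by
    rw [permMatrix_pow, conjTranspose_permMatrix_mul_diagonal_mul_permMatrix]]
  simp only [Equiv.nsmul_addRight, Equiv.addRight_symm]
  rw [← Fin.sum_univ_eq_sum_range
    (fun k => diagonal (x ∘ Equiv.addRight (-((k + 1) • (1 : Fin d)))))]
  ext a b
  simp only [sum_apply, diagonal_apply, smul_apply, one_apply]
  have hrot : ∑ c : Fin d, x (a + -((c.val + 1) • 1)) = ∑ i, x i := by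
    rw [← Equiv.sum_comp ((Equiv.addRight 1).trans (Equiv.subLeft a)) x]
    refine sum_congr rfl fun c _ => ?_
    simp [nsmul_one, sub_eq_add_neg, add_comm]
  split_ifs
  · simp only [Function.comp_apply, Equiv.coe_addRight, hrot, smul_eq_mul, mul_one]
  · simp

lemma sum_conjTranspose_pow_mul_pow_eq_trace_inv_smul {A S : Matrix (Fin d) (Fin d) 𝕜}
    (hS : Sᴴ * A * S = 1) (hdiag : (Sᴴ * S).IsDiag) :
    ∑ k ∈ range d, ((S * (Equiv.addRight (1 : Fin d)).permMatrix 𝕜 * S⁻¹) ^ (k + 1))ᴴ *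
      (S * (Equiv.addRight (1 : Fin d)).permMatrix 𝕜 * S⁻¹) ^ (k + 1) = trace A⁻¹ • A := by
  set P := (Equiv.addRight (1 : Fin d)).permMatrix 𝕜
  have hAinv : A⁻¹ = S * Sᴴ := inv_eq_left_inv <| by
    rw [Matrix.mul_assoc, mul_eq_one_comm.mp hS]
  have hSdet : IsUnit S.det := isUnit_det_of_left_inverse hS
  have hA_eq : A = (S⁻¹)ᴴ * S⁻¹ := by
    calc A = (S * S⁻¹)ᴴ * A * (S * S⁻¹) := by
          rw [mul_nonsing_inv _ hSdet, conjTranspose_one, Matrix.one_mul, Matrix.mul_one]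
      _ = (S⁻¹)ᴴ * (Sᴴ * A * S) * S⁻¹ := by simp only [conjTranspose_mul, Matrix.mul_assoc]
      _ = (S⁻¹)ᴴ * S⁻¹ := by rw [hS, Matrix.mul_one]
  have hterm : ∀ k : ℕ, ((S * P * S⁻¹) ^ k)ᴴ * (S * P * S⁻¹) ^ k =
      (S⁻¹)ᴴ * ((P ^ k)ᴴ * diagonal (Sᴴ * S).diag * P ^ k) * S⁻¹ := fun k => by
    rw [mul_mul_nonsing_inv_pow hSdet, hdiag.diagonal_diag]
    simp only [conjTranspose_mul, Matrix.mul_assoc]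
  rw [sum_congr rfl fun k _ => hterm (k + 1), ← Matrix.sum_mul, ← Matrix.mul_sum,
    sum_conjTranspose_pow_mul_diagonal_mul_pow_addRight_one, Matrix.mul_smul, Matrix.smul_mul,
    Matrix.mul_one, ← hA_eq, hAinv, trace_mul_comm]
  rfl

open scoped Matrix.Norms.Elementwise in
theorem PosDef.exists_similar_unitary_tendsto_cesaroMean {A : Matrix (Fin d) (Fin d) 𝕜}
    (hA : A.PosDef) :
    ∃ T S U : Matrix (Fin d) (Fin d) 𝕜, IsUnit S ∧ U * Uᴴ = 1 ∧ Uᴴ * U = 1 ∧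
      T = S * U * S⁻¹ ∧ (∃ M : ℝ, ∀ (k : ℕ) (i j : Fin d), ‖(T ^ k) i j‖ ≤ M) ∧
      Tendsto (cesaroMean T) atTop (𝓝 ((trace A⁻¹ / d) • A)) := by
  obtain ⟨S, hS, hdiag⟩ := hA.exists_conjTranspose_mul_mul_eq_one_and_isDiag
  have hSdet : IsUnit S.det := isUnit_det_of_left_inverse hS
  have hsum := sum_conjTranspose_pow_mul_pow_eq_trace_inv_smul hS hdiag
  have hPd := addRight_one_permMatrix_pow_card (𝕜 := 𝕜) (d := d)
  set P := (Equiv.addRight (1 : Fin d)).permMatrix 𝕜 with hP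
  set T := S * P * S⁻¹
  have hTd : T ^ d = 1 := by
    rw [mul_mul_nonsing_inv_pow hSdet, hPd, Matrix.mul_one, mul_nonsing_inv _ hSdet]
  have hperiodic : Function.Periodic (fun k => (T ^ (k + 1))ᴴ * T ^ (k + 1)) d := fun k => by
    simp only [add_right_comm k d 1, pow_add _ (k + 1) d, hTd, Matrix.mul_one]
  have hlim := hperiodic.tendsto_inv_smul_sum_range (𝕜 := 𝕜) (NeZero.pos d)
  rw [hsum, smul_smul, inv_mul_eq_div] at hlim
  refine ⟨T, S, P, (isUnit_iff_isUnit_det S).mpr hSdet, ?_, ?_, rfl,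
    exists_norm_pow_apply_le_of_pow_eq_one (NeZero.pos d) hTd, hlim⟩
  · rw [hP, conjTranspose_permMatrix, ← permMatrix_mul, inv_mul_cancel, permMatrix_one]
  · rw [hP, conjTranspose_permMatrix, ← permMatrix_mul, mul_inv_cancel, permMatrix_one]

end Matrix

/-- A positive definite matrix `A ∈ B(ℂ^d)` is the Cesàro asymptotic limit of a
power bounded matrix of class `C₁₁` (i.e. one similar to a unitary matrix)
if and only if `tr (A⁻¹) = d` (equivalently, the reciprocals of the eigenvalues
of `A` sum to `d`). -/
theorem stmt12 {d : ℕ} (A : Matrix (Fin d) (Fin d) ℂ) (hA : A.PosDef) :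
    (∃ T S U : Matrix (Fin d) (Fin d) ℂ, IsUnit S ∧
      U * U.conjTranspose = 1 ∧ U.conjTranspose * U = 1 ∧ T = S * U * S⁻¹ ∧
      (∃ M : ℝ, ∀ (n : ℕ) (i j : Fin d), ‖(T ^ n) i j‖ ≤ M) ∧
      (∀ i j : Fin d,
        Tendsto (fun n : ℕ =>
          (((n : ℂ)⁻¹ •
            ∑ k ∈ Finset.range n, ((T ^ (k + 1)).conjTranspose * T ^ (k + 1))) i j))
          atTop (𝓝 (A i j)))) ↔
    Matrix.trace A⁻¹ = (d : ℂ) := by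
  have hcesaro : ∀ T : Matrix (Fin d) (Fin d) ℂ, Tendsto (cesaroMean T) atTop (𝓝 A) ↔
      ∀ i j : Fin d, Tendsto (fun n : ℕ => cesaroMean T n i j) atTop (𝓝 (A i j)) := fun _ =>
    tendsto_pi_nhds.trans (forall_congr' fun _ => tendsto_pi_nhds)
  constructor
  · rintro ⟨T, -, -, -, -, -, -, -, hT⟩
    rw [trace_inv_eq_card_of_tendsto_cesaroMean ((isUnit_iff_isUnit_det A).mp hA.isUnit)
      ((hcesaro T).2 hT), Fintype.card_fin]
  · intro htr
    rcases Nat.eq_zero_or_pos d with rfl | hd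
    · exact ⟨1, 1, 1, isUnit_one, by simp, by simp, by simp, ⟨0, fun _ i => i.elim0⟩,
        fun i => i.elim0⟩
    · have := NeZero.of_pos hd
      obtain ⟨T, S, U, hS, hU, hU', hT, hbdd, hlim⟩ := hA.exists_similar_unitary_tendsto_cesaroMean
      rw [htr, div_self (Nat.cast_ne_zero.mpr hd.ne'), one_smul] at hlim
      exact ⟨T, S, U, hS, hU, hU', hT, hbdd, (hcesaro T).1 hlim⟩
end

section
/- A positive definite matrix A ∈ B(ℂ^d) satisfies tr(A^{-1}) = d if and only if there exists an invertible matrix S ∈ B(ℂ^d) whose columns are all unit vectors such that A = (S S*)^{-1}. -/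
/-!
Write `B = A⁻¹`. The squared column norms of `S` are the diagonal entries of `Sᴴ S`, whose trace is
`tr (S Sᴴ)`; so unit columns with `S Sᴴ = B` force `tr B = d`. Conversely, if `tr B = d`, write
`B = T Tᴴ` with `Tᴴ T = diag (λ₁, …, λ_d)` (spectral theorem) and put `S = T F` for a unitary `F`
all of whose entries have modulus `1 / √d`, e.g. the discrete Fourier matrix. Then `S Sᴴ = B`, and
the `j`-th diagonal entry of `Sᴴ S = Fᴴ diag (λ) F` is `∑ₖ |F k j|² λₖ = tr B / d = 1`.
-/

open Matrix

open scoped ComplexOrder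

theorem Matrix.conjTranspose_mul_self_apply_self {𝕜 m n : Type*} [RCLike 𝕜] [Fintype m]
    (S : Matrix m n 𝕜) (j : n) : (Sᴴ * S) j j = ((∑ i, ‖S i j‖ ^ 2 : ℝ) : 𝕜) := by
  simp [mul_apply, RCLike.conj_mul]

theorem Matrix.conjTranspose_mul_diagonal_mul_apply_self {𝕜 ι : Type*} [RCLike 𝕜] [Fintype ι]
    [DecidableEq ι] (F : Matrix ι ι 𝕜) (c : ι → 𝕜) (j : ι) :
    (Fᴴ * diagonal c * F) j j = ∑ k, ((‖F k j‖ ^ 2 : ℝ) : 𝕜) * c k := by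
  rw [mul_apply]
  refine Finset.sum_congr rfl fun k _ => ?_
  rw [mul_diagonal, conjTranspose_apply, RCLike.star_def, RCLike.ofReal_pow, ← RCLike.conj_mul]
  ring

namespace ZMod

variable (N : ℕ) [NeZero N]

noncomputable def fourierMatrix : Matrix (ZMod N) (ZMod N) ℂ :=
  of fun j k => stdAddChar (j * k) / Real.sqrt N

theorem norm_sq_fourierMatrix_apply (j k : ZMod N) :
    ‖fourierMatrix N j k‖ ^ 2 = (N : ℝ)⁻¹ := by
  simp [fourierMatrix, stdAddChar_apply, Real.sq_sqrt, Circle.norm_coe]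

theorem fourierMatrix_mul_conjTranspose : fourierMatrix N * (fourierMatrix N)ᴴ = 1 := by
  ext j l
  have hN : (N : ℂ) ≠ 0 := NeZero.ne _
  have hsq : ((Real.sqrt N : ℝ) : ℂ) * Real.sqrt N = N := by
    rw [← Complex.ofReal_mul, Real.mul_self_sqrt (Nat.cast_nonneg N)]; simp
  have hterm (k : ZMod N) : fourierMatrix N j k * star (fourierMatrix N l k)
      = stdAddChar (k * (j - l)) / N := by
    simp only [fourierMatrix, of_apply, star_div₀, Complex.star_def, Complex.conj_ofReal,
      ← AddChar.map_neg_eq_conj, ← hsq]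
    rw [div_mul_div_comm, ← AddChar.map_add_eq_mul]
    ring_nf
  simp only [mul_apply, conjTranspose_apply, hterm, ← Finset.sum_div,
    AddChar.sum_mulShift _ (isPrimitive_stdAddChar N), sub_eq_zero, one_apply, ZMod.card]
  split_ifs <;> simp [hN]

end ZMod

theorem Matrix.exists_mul_conjTranspose_eq_one_and_norm_sq_apply_eq (ι : Type*) [Fintype ι]
    [DecidableEq ι] :
    ∃ F : Matrix ι ι ℂ, F * Fᴴ = 1 ∧ ∀ i j, ‖F i j‖ ^ 2 = (Fintype.card ι : ℝ)⁻¹ := by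
  cases isEmpty_or_nonempty ι
  · exact ⟨1, Subsingleton.elim _ _, fun i => isEmptyElim i⟩
  have : NeZero (Fintype.card ι) := ⟨Fintype.card_ne_zero⟩
  let e : ι ≃ ZMod (Fintype.card ι) := Fintype.equivOfCardEq (ZMod.card _).symm
  refine ⟨(ZMod.fourierMatrix _).submatrix e e, ?_, fun i j => ZMod.norm_sq_fourierMatrix_apply ..⟩
  rw [conjTranspose_submatrix, submatrix_mul_equiv, ZMod.fourierMatrix_mul_conjTranspose,
    submatrix_one_equiv]

theorem Matrix.PosSemidef.exists_mul_conjTranspose_eq_and_conjTranspose_mul_eq_diagonal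
    {𝕜 ι : Type*} [RCLike 𝕜] [Fintype ι] [DecidableEq ι] {B : Matrix ι ι 𝕜}
    (hB : B.PosSemidef) : ∃ (T : Matrix ι ι 𝕜) (c : ι → 𝕜), T * Tᴴ = B ∧ Tᴴ * T = diagonal c := by
  set U := hB.isHermitian.eigenvectorUnitary
  set R : Matrix ι ι 𝕜 := diagonal fun i => (Real.sqrt (hB.isHermitian.eigenvalues i) : 𝕜)
  have hR : Rᴴ = R := by simp [R, diagonal_conjTranspose]
  have hRR : R * R = diagonal (RCLike.ofReal ∘ hB.isHermitian.eigenvalues) := by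
    simp only [R, diagonal_mul_diagonal, ← RCLike.ofReal_mul,
      Real.mul_self_sqrt (hB.eigenvalues_nonneg _)]
    rfl
  refine ⟨U * R, RCLike.ofReal ∘ hB.isHermitian.eigenvalues, ?_, ?_⟩
  · rw [conjTranspose_mul, hR, Matrix.mul_assoc, ← Matrix.mul_assoc R, hRR, ← Matrix.mul_assoc,
      ← star_eq_conjTranspose]
    exact (Unitary.conjStarAlgAut_apply ..).symm.trans hB.isHermitian.spectral_theorem.symm
  · rw [conjTranspose_mul, hR, Matrix.mul_assoc, ← Matrix.mul_assoc _ (U : Matrix ι ι 𝕜),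
      ← star_eq_conjTranspose, Unitary.coe_star_mul_self, Matrix.one_mul, hRR]

theorem Matrix.PosSemidef.exists_mul_conjTranspose_eq_and_diag_eq_trace_div_card
    {ι : Type*} [Fintype ι] [DecidableEq ι] {B : Matrix ι ι ℂ} (hB : B.PosSemidef) :
    ∃ S : Matrix ι ι ℂ, S * Sᴴ = B ∧ ∀ j, (Sᴴ * S) j j = B.trace / (Fintype.card ι : ℂ) := by
  obtain ⟨T, c, hTT, hTT'⟩ := hB.exists_mul_conjTranspose_eq_and_conjTranspose_mul_eq_diagonal
  obtain ⟨F, hF, hFnorm⟩ := exists_mul_conjTranspose_eq_one_and_norm_sq_apply_eq ι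
  refine ⟨T * F, ?_, fun j => ?_⟩
  · rw [conjTranspose_mul, Matrix.mul_assoc, ← Matrix.mul_assoc F, hF, Matrix.one_mul, hTT]
  · have htrace : B.trace = ∑ k, c k := by
      rw [← hTT, trace_mul_comm, hTT', trace_diagonal]
    calc ((T * F)ᴴ * (T * F)) j j = (Fᴴ * diagonal c * F) j j := by
          rw [conjTranspose_mul, Matrix.mul_assoc, ← Matrix.mul_assoc Tᴴ, hTT', Matrix.mul_assoc]
      _ = B.trace / (Fintype.card ι : ℂ) := by
          simp [conjTranspose_mul_diagonal_mul_apply_self, hFnorm, htrace, Finset.mul_sum,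
            div_eq_inv_mul]

/-- A positive definite matrix `A ∈ B(ℂ^d)` satisfies `tr (A⁻¹) = d` if and only
if there is an invertible matrix `S` all of whose columns are unit vectors with
`A = (S S*)⁻¹`. -/
theorem stmt13 {d : ℕ} (A : Matrix (Fin d) (Fin d) ℂ) (hA : A.PosDef) :
    Matrix.trace A⁻¹ = (d : ℂ) ↔
      ∃ S : Matrix (Fin d) (Fin d) ℂ, IsUnit S ∧
        (∀ j : Fin d, ∑ i : Fin d, ‖S i j‖ ^ 2 = 1) ∧
        A = (S * S.conjTranspose)⁻¹ := by
  have hcol (S : Matrix (Fin d) (Fin d) ℂ) :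
      (∀ j, ∑ i, ‖S i j‖ ^ 2 = 1) ↔ ∀ j, (Sᴴ * S) j j = 1 := by
    simp only [conjTranspose_mul_self_apply_self, ← RCLike.ofReal_one (K := ℂ), RCLike.ofReal_inj]
  simp only [hcol]
  constructor
  · intro htrace
    obtain ⟨S, hSS, hdiag⟩ :=
      hA.inv.posSemidef.exists_mul_conjTranspose_eq_and_diag_eq_trace_div_card
    have hdet : IsUnit (S * Sᴴ).det := by rw [hSS]; exact hA.inv.det_pos.ne'.isUnit
    refine ⟨S, (isUnit_iff_isUnit_det S).mpr (isUnit_of_mul_isUnit_left (det_mul S Sᴴ ▸ hdet)),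
      fun j => ?_, ?_⟩
    · have : (d : ℂ) ≠ 0 := Nat.cast_ne_zero.mpr (Fin.pos j).ne'
      rw [hdiag, htrace, Fintype.card_fin, div_self this]
    · rw [hSS, nonsing_inv_nonsing_inv A hA.det_pos.ne'.isUnit]
  · rintro ⟨S, hS, hdiag, rfl⟩
    have hSdet : IsUnit S.det := (isUnit_iff_isUnit_det S).mp hS
    have hdet : IsUnit (S * Sᴴ).det := by
      rw [det_mul, det_conjTranspose]
      exact hSdet.mul hSdet.star
    rw [nonsing_inv_nonsing_inv _ hdet, trace_mul_comm, trace]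
    simp [hdiag]
end

section
/- Let T be an invertible contraction on a complex Hilbert space whose asymptotic limit A_T is invertible, let r denote the minimum of the spectrum of A_T, and let M = ker(A_T − rI). Then ‖T^{-1}h‖ = ‖h‖ for all h ∈ M, and T^{-1}M ⊆ M (i.e. M is invariant under T^{-1} and T acts isometrically on it). -/
/-!
If `h` is an `r`-eigenvector of `A` and `x = T⁻¹ h`, then `⟪A x, x⟫ = ⟪A h, h⟫ = r ‖h‖²`.
Since `r` bounds the quadratic form of `A` from below, this forces `‖x‖ ≤ ‖h‖`, while the
contraction `T` gives `‖h‖ ≤ ‖x‖`. Hence `‖x‖ = ‖h‖`, so `⟪(A - r) x, x⟫ = 0` for the positive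
operator `A - r`; a positive operator `B = S* S` kills every
vector with `⟪B x, x⟫ = ‖S x‖² = 0`, so `A x = r x`.
-/

open ContinuousLinearMap

theorem ContinuousLinearMap.reApplyInnerSelf_of_apply_eq_smul {𝕜 E : Type*} [RCLike 𝕜]
    [NormedAddCommGroup E] [InnerProductSpace 𝕜 E] {A : E →L[𝕜] E} {r : ℝ} {x : E}
    (hx : A x = (r : 𝕜) • x) : A.reApplyInnerSelf x = r * ‖x‖ ^ 2 := by
  rw [reApplyInnerSelf_apply, hx, inner_smul_real_left, inner_self_eq_norm_sq_to_K,
    RCLike.smul_re, ← RCLike.ofReal_pow, RCLike.ofReal_re]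

section Complex

variable {H : Type*} [NormedAddCommGroup H] [InnerProductSpace ℂ H]

theorem ContinuousLinearMap.reApplyInnerSelf_sub_smul_one (A : H →L[ℂ] H) (r : ℝ) (y : H) :
    (A - (r : ℂ) • 1).reApplyInnerSelf y = A.reApplyInnerSelf y - r * ‖y‖ ^ 2 := by
  have hr : ((r : ℂ) • (1 : H →L[ℂ] H)).reApplyInnerSelf y = r * ‖y‖ ^ 2 :=
    reApplyInnerSelf_of_apply_eq_smul (by rw [smul_apply, one_apply_eq_self]; rfl)
  rw [← hr]
  simp only [reApplyInnerSelf_apply, sub_apply, inner_sub_left, map_sub]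

variable [CompleteSpace H]

theorem ContinuousLinearMap.IsPositive.apply_eq_zero_of_reApplyInnerSelf_eq_zero
    {B : H →L[ℂ] H} (hB : B.IsPositive) {x : H} (hx : B.reApplyInnerSelf x = 0) : B x = 0 := by
  obtain ⟨S, rfl⟩ := CStarAlgebra.nonneg_iff_eq_star_mul_self.mp ((nonneg_iff_isPositive B).mpr hB)
  have hSx : S x = 0 := by
    rw [← norm_eq_zero, ← sq_eq_zero_iff, apply_norm_sq_eq_inner_adjoint_left]
    exact hx
  rw [mul_apply_eq_comp, hSx, map_zero]

theorem ContinuousLinearMap.apply_eq_smul_of_reApplyInnerSelf_eq {A : H →L[ℂ] H}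
    (hA : IsSelfAdjoint A) {r : ℝ} (hr : ∀ y, r * ‖y‖ ^ 2 ≤ A.reApplyInnerSelf y) {x : H}
    (hx : A.reApplyInnerSelf x = r * ‖x‖ ^ 2) : A x = (r : ℂ) • x := by
  have hpos : (A - (r : ℂ) • 1).IsPositive :=
    ⟨isSelfAdjoint_iff_isSymmetric.mp (hA.sub (.smul (by simp [IsSelfAdjoint]) (.one _))),
      fun y => by rw [reApplyInnerSelf_sub_smul_one]; linarith [hr y]⟩
  have hx0 := hpos.apply_eq_zero_of_reApplyInnerSelf_eq_zero
    (by rw [reApplyInnerSelf_sub_smul_one, hx, sub_self])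
  rwa [sub_apply, sub_eq_zero, smul_apply, one_apply_eq_self] at hx0

end Complex

theorem stmt16_general {H : Type*} [NormedAddCommGroup H] [InnerProductSpace ℂ H] [CompleteSpace H]
    (T T' A : H →L[ℂ] H) (hT : ‖T‖ ≤ 1)
    (hTT' : T * T' = 1)
    (hA : A.IsPositive)
    (r : ℝ) (hr0 : 0 < r)
    (hrlow : ∀ x : H, r * ‖x‖ ^ 2 ≤ A.reApplyInnerSelf x)
    (hAT : ∀ x : H, A.reApplyInnerSelf (T x) = A.reApplyInnerSelf x) :
    ∀ h : H, A h = (r : ℂ) • h → ‖T' h‖ = ‖h‖ ∧ A (T' h) = (r : ℂ) • (T' h) := by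
  intro h hh
  have hTT'h : T (T' h) = h := by rw [← mul_apply_eq_comp, hTT', one_apply_eq_self]
  have hAT'h : A.reApplyInnerSelf (T' h) = r * ‖h‖ ^ 2 := by
    rw [← hAT, hTT'h, reApplyInnerSelf_of_apply_eq_smul hh]
  have hle : ‖T' h‖ ≤ ‖h‖ := by
    have hsq := le_of_mul_le_mul_left (hAT'h ▸ hrlow (T' h)) hr0
    exact (pow_le_pow_iff_left₀ (norm_nonneg _) (norm_nonneg _) two_ne_zero).mp hsq
  have hge : ‖h‖ ≤ ‖T' h‖ :=
    calc ‖h‖ = ‖T (T' h)‖ := by rw [hTT'h]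
      _ ≤ ‖T' h‖ := (T.le_of_opNorm_le hT _).trans_eq (one_mul _)
  have hnorm : ‖T' h‖ = ‖h‖ := le_antisymm hle hge
  refine ⟨hnorm, apply_eq_smul_of_reApplyInnerSelf_eq hA.isSelfAdjoint hrlow ?_⟩
  rw [hAT'h, hnorm]

/-- Let `T` be an invertible contraction with invertible positive asymptotic
limit `A` (so that `⟨A T x, T x⟩ = ⟨A x, x⟩` for all `x`), let `r > 0` be the
minimum of the spectrum of `A`, and let `M = ker (A - r I)`. Then
`‖T⁻¹ h‖ = ‖h‖` for all `h ∈ M` and `T⁻¹ M ⊆ M`. -/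
theorem stmt16 {H : Type*} [NormedAddCommGroup H] [InnerProductSpace ℂ H] [CompleteSpace H]
    (T T' A : H →L[ℂ] H) (hT : ‖T‖ ≤ 1)
    (hTT' : T * T' = 1) (hT'T : T' * T = 1)
    (hA : A.IsPositive)
    (r : ℝ) (hr0 : 0 < r) (hrmem : (r : ℂ) ∈ spectrum ℂ A)
    (hrlow : ∀ x : H, r * ‖x‖ ^ 2 ≤ A.reApplyInnerSelf x)
    (hAT : ∀ x : H, A.reApplyInnerSelf (T x) = A.reApplyInnerSelf x) :
    ∀ h : H, A h = (r : ℂ) • h → ‖T' h‖ = ‖h‖ ∧ A (T' h) = (r : ℂ) • (T' h) :=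
  stmt16_general T T' A hT hTT' hA r hr0 hrlow hAT
end

section
/- Let A ∈ B(F), B ∈ B(G) be Hilbert space operators such that G is spanned by the generalized eigenspaces ⋁_{j≥1} ker(B − λI)^j over all λ ∈ σ_p(B) \ σ_p(A). Then the Sylvester-type map Y ↦ AY − YB on B(G,F) is injective: if AY = YB then Y = 0. -/
open Filter Topology ContinuousLinearMap

/-- If `G` is spanned (densely) by the root subspaces `ker (B - λ)^j` over the
eigenvalues `λ` of `B` that are not eigenvalues of `A`, then the Sylvester map
`Y ↦ AY - YB` is injective: `AY = YB` implies `Y = 0`. -/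
theorem stmt17 {F G : Type*}
    [NormedAddCommGroup F] [InnerProductSpace ℂ F] [CompleteSpace F]
    [NormedAddCommGroup G] [InnerProductSpace ℂ G] [CompleteSpace G]
    (A : F →L[ℂ] F) (B : G →L[ℂ] G)
    (hspan : (Submodule.span ℂ
      {g : G | ∃ (l : ℂ) (j : ℕ),
        (∃ v : G, v ≠ 0 ∧ B v = l • v) ∧
        (∀ v : F, A v = l • v → v = 0) ∧
        ((B - l • (1 : G →L[ℂ] G)) ^ j) g = 0}).topologicalClosure = ⊤)
    (Y : G →L[ℂ] F) (hY : A.comp Y = Y.comp B) :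
    Y = 0 := by
  -- First: Y vanishes on each generator.
  have hgen : ∀ g ∈ {g : G | ∃ (l : ℂ) (j : ℕ),
        (∃ v : G, v ≠ 0 ∧ B v = l • v) ∧
        (∀ v : F, A v = l • v → v = 0) ∧
        ((B - l • (1 : G →L[ℂ] G)) ^ j) g = 0}, Y g = 0 := by
    rintro g ⟨l, j, -, hA, hg⟩
    -- intertwining: (A - l)^j ∘ Y = Y ∘ (B - l)^j
    have hcomm : ∀ x : G, A (Y x) = Y (B x) := by
      intro x
      have := congrArg (fun T : G →L[ℂ] F => T x) hY
      simpa using this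
    have hcomm1 : ∀ x : G, (A - l • (1 : F →L[ℂ] F)) (Y x)
        = Y ((B - l • (1 : G →L[ℂ] G)) x) := by
      intro x
      simp [ContinuousLinearMap.sub_apply, ContinuousLinearMap.smul_apply,
        hcomm x, map_sub, map_smul]
    have hcommj : ∀ (n : ℕ) (x : G),
        ((A - l • (1 : F →L[ℂ] F)) ^ n) (Y x)
        = Y (((B - l • (1 : G →L[ℂ] G)) ^ n) x) := by
      intro n
      induction n with
      | zero => intro x; simp
      | succ n ih =>
          intro x
          rw [pow_succ, pow_succ]
          simp only [ContinuousLinearMap.mul_apply]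
          rw [hcomm1 x, ih]
    -- injectivity of (A - l)^j
    have hinj : ∀ (n : ℕ) (v : F), ((A - l • (1 : F →L[ℂ] F)) ^ n) v = 0 → v = 0 := by
      intro n
      induction n with
      | zero => intro v hv; simpa using hv
      | succ n ih =>
          intro v hv
          rw [pow_succ] at hv
          simp only [ContinuousLinearMap.mul_apply] at hv
          have h1 : (A - l • (1 : F →L[ℂ] F)) v = 0 := by
            apply ih
            have hx := hv
            -- (A - l)^n ((A-l) v) = 0; need ((A-l)^n) ((A-l) v) = 0 from pow_succ'
            calc ((A - l • (1 : F →L[ℂ] F)) ^ n) ((A - l • (1 : F →L[ℂ] F)) v)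
                = (((A - l • (1 : F →L[ℂ] F)) ^ n) * (A - l • (1 : F →L[ℂ] F))) v := rfl
              _ = ((A - l • (1 : F →L[ℂ] F)) ^ (n + 1)) v := by rw [pow_succ]
              _ = 0 := by rw [pow_succ]; exact hv
          have : A v = l • v := by
            have := h1
            simp only [ContinuousLinearMap.sub_apply, ContinuousLinearMap.smul_apply,
              ContinuousLinearMap.one_apply, sub_eq_zero] at this
            exact this
          exact hA v this
    have : ((A - l • (1 : F →L[ℂ] F)) ^ j) (Y g) = 0 := by
      rw [hcommj j g, hg, map_zero]
    exact hinj j (Y g) this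
  -- Y vanishes on the span
  have hspan0 : ∀ g ∈ Submodule.span ℂ {g : G | ∃ (l : ℂ) (j : ℕ),
        (∃ v : G, v ≠ 0 ∧ B v = l • v) ∧
        (∀ v : F, A v = l • v → v = 0) ∧
        ((B - l • (1 : G →L[ℂ] G)) ^ j) g = 0}, Y g = 0 := by
    intro g hg
    refine Submodule.span_induction (fun x hx => hgen x hx) (map_zero Y)
      (fun x y _ _ hx hy => by rw [map_add, hx, hy, add_zero])
      (fun a x _ hx => by rw [map_smul, hx, smul_zero]) hg
  -- Y vanishes on the closure, which is ⊤
  ext g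
  have hmem : g ∈ (Submodule.span ℂ {g : G | ∃ (l : ℂ) (j : ℕ),
        (∃ v : G, v ≠ 0 ∧ B v = l • v) ∧
        (∀ v : F, A v = l • v → v = 0) ∧
        ((B - l • (1 : G →L[ℂ] G)) ^ j) g = 0}).topologicalClosure := by
    rw [hspan]; trivial
  have hclosed : IsClosed {x : G | Y x = 0} := isClosed_eq Y.continuous continuous_const
  have := hclosed.closure_subset_iff.2 (fun x hx => hspan0 x hx) hmem
  simpa using this
end

section
/- Let K₁,…,K₄ be nonzero Hilbert spaces and A ∈ B(K₁,K₂), B ∈ B(K₁,K₃) fixed. The equation YA = ZB (for Y ∈ B(K₂,K₄), Z ∈ B(K₃,K₄)) has only the trivial solution Y = 0, Z = 0 if and only if A and B have dense ranges and ran A* ∩ ran B* = {0}. -/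
open ContinuousLinearMap

/-! Testing `Y A = Z B` against rank-one operators `x ↦ ⟪u, x⟫ w` shows that it has only the
trivial solution iff `A* u = B* v` forces `u = v = 0`; conversely a solution `(Y, Z)` gives the
pairs `(Y* k, Z* k)`. The latter condition splits into injectivity of `A*` and `B*`, which is
density of the ranges of `A` and `B`, and `ran A* ∩ ran B* = {0}`. -/

theorem forall_apply_eq_apply_imp_eq_zero_iff {M N P F G : Type*}
    [AddGroup M] [AddGroup N] [AddGroup P]
    [FunLike F M P] [AddMonoidHomClass F M P] [FunLike G N P] [AddMonoidHomClass G N P]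
    (f : F) (g : G) :
    (∀ u v, f u = g v → u = 0 ∧ v = 0) ↔
      Function.Injective f ∧ Function.Injective g ∧ Set.range f ∩ Set.range g = {0} := by
  simp only [injective_iff_map_eq_zero, Set.eq_singleton_iff_unique_mem]
  refine ⟨fun h ↦ ⟨fun u hu ↦ (h u 0 (by simp [hu])).1, fun v hv ↦ (h 0 v (by simp [hv])).2,
    ⟨⟨0, map_zero f⟩, 0, map_zero g⟩, ?_⟩, ?_⟩
  · rintro _ ⟨⟨u, rfl⟩, v, hv⟩
    simp [(h u v hv.symm).1]
  · rintro ⟨hf, hg, -, hfg⟩ u v huv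
    have hu : f u = 0 := hfg _ ⟨⟨u, rfl⟩, v, huv.symm⟩
    exact ⟨hf u hu, hg v (huv ▸ hu)⟩

namespace ContinuousLinearMap

theorem smulRight_innerSL_eq_zero_iff {E H : Type*} [NormedAddCommGroup E]
    [InnerProductSpace ℂ E] [NormedAddCommGroup H] [NormedSpace ℂ H] {w : H} (hw : w ≠ 0)
    (u : E) : (innerSL ℂ u).smulRight w = 0 ↔ u = 0 := by
  refine ⟨fun h ↦ ?_, by rintro rfl; simp⟩
  simpa [hw] using congr($h u)

variable {E F G : Type*}
  [NormedAddCommGroup E] [InnerProductSpace ℂ E] [CompleteSpace E]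
  [NormedAddCommGroup F] [InnerProductSpace ℂ F] [CompleteSpace F]
  [NormedAddCommGroup G] [InnerProductSpace ℂ G] [CompleteSpace G]

theorem denseRange_iff_injective_adjoint (A : E →L[ℂ] F) :
    DenseRange A ↔ Function.Injective (adjoint A) := by
  rw [← coe_coe (adjoint A), ← LinearMap.ker_eq_bot, ← orthogonal_range,
    ← Submodule.topologicalClosure_eq_top_iff, ← Submodule.dense_iff_topologicalClosure_eq_top]
  rfl

theorem smulRight_innerSL_comp {H : Type*} [NormedAddCommGroup H] [NormedSpace ℂ H]
    (A : E →L[ℂ] F) (u : F) (w : H) :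
    ((innerSL ℂ u).smulRight w).comp A = (innerSL ℂ (adjoint A u)).smulRight w := by
  ext x
  simp [adjoint_inner_left]

theorem forall_comp_eq_imp_eq_zero_iff {H : Type*}
    [NormedAddCommGroup H] [InnerProductSpace ℂ H] [CompleteSpace H] [Nontrivial H]
    (A : E →L[ℂ] F) (B : E →L[ℂ] G) :
    (∀ (Y : F →L[ℂ] H) (Z : G →L[ℂ] H), Y.comp A = Z.comp B → Y = 0 ∧ Z = 0) ↔
      ∀ u v, adjoint A u = adjoint B v → u = 0 ∧ v = 0 := by
  constructor
  · intro h u v huv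
    obtain ⟨w, hw⟩ := exists_ne (0 : H)
    simpa only [smulRight_innerSL_eq_zero_iff hw] using
      h ((innerSL ℂ u).smulRight w) ((innerSL ℂ v).smulRight w)
        (by rw [smulRight_innerSL_comp, smulRight_innerSL_comp, huv])
  · intro h Y Z hYZ
    have hadj (k : H) : adjoint A (adjoint Y k) = adjoint B (adjoint Z k) := by
      simp only [← comp_apply, ← adjoint_comp, hYZ]
    exact ⟨adjoint.map_eq_zero_iff.mp (ext fun k ↦ (h _ _ (hadj k)).1),
      adjoint.map_eq_zero_iff.mp (ext fun k ↦ (h _ _ (hadj k)).2)⟩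

end ContinuousLinearMap

theorem stmt18_general {K₁ K₂ K₃ K₄ : Type*}
    [NormedAddCommGroup K₁] [InnerProductSpace ℂ K₁] [CompleteSpace K₁]
    [NormedAddCommGroup K₂] [InnerProductSpace ℂ K₂] [CompleteSpace K₂]
    [NormedAddCommGroup K₃] [InnerProductSpace ℂ K₃] [CompleteSpace K₃]
    [NormedAddCommGroup K₄] [InnerProductSpace ℂ K₄] [CompleteSpace K₄] [Nontrivial K₄]
    (A : K₁ →L[ℂ] K₂) (B : K₁ →L[ℂ] K₃) :
    (∀ (Y : K₂ →L[ℂ] K₄) (Z : K₃ →L[ℂ] K₄), Y.comp A = Z.comp B → Y = 0 ∧ Z = 0) ↔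
      (DenseRange (⇑A) ∧ DenseRange (⇑B) ∧
        Set.range (⇑(ContinuousLinearMap.adjoint A)) ∩
          Set.range (⇑(ContinuousLinearMap.adjoint B)) = {0}) := by
  rw [forall_comp_eq_imp_eq_zero_iff, forall_apply_eq_apply_imp_eq_zero_iff,
    denseRange_iff_injective_adjoint, denseRange_iff_injective_adjoint]

/-- For fixed `A ∈ B(K₁,K₂)` and `B ∈ B(K₁,K₃)` between nonzero Hilbert spaces,
the equation `Y A = Z B` has only the trivial solution `Y = 0, Z = 0` iff `A`
and `B` have dense ranges and `ran A* ∩ ran B* = {0}`. -/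
theorem stmt18 {K₁ K₂ K₃ K₄ : Type*}
    [NormedAddCommGroup K₁] [InnerProductSpace ℂ K₁] [CompleteSpace K₁] [Nontrivial K₁]
    [NormedAddCommGroup K₂] [InnerProductSpace ℂ K₂] [CompleteSpace K₂] [Nontrivial K₂]
    [NormedAddCommGroup K₃] [InnerProductSpace ℂ K₃] [CompleteSpace K₃] [Nontrivial K₃]
    [NormedAddCommGroup K₄] [InnerProductSpace ℂ K₄] [CompleteSpace K₄] [Nontrivial K₄]
    (A : K₁ →L[ℂ] K₂) (B : K₁ →L[ℂ] K₃) :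
    (∀ (Y : K₂ →L[ℂ] K₄) (Z : K₃ →L[ℂ] K₄), Y.comp A = Z.comp B → Y = 0 ∧ Z = 0) ↔
      (DenseRange (⇑A) ∧ DenseRange (⇑B) ∧
        Set.range (⇑(ContinuousLinearMap.adjoint A)) ∩
          Set.range (⇑(ContinuousLinearMap.adjoint B)) = {0}) :=
  stmt18_general A B
end

section
/- If T ∈ B(H) has dense range and f is a cyclic vector for T (i.e. the closed linear span of {T^n f : n ≥ 0} is H), then Tf is also a cyclic vector for T. Moreover, if T is cyclic with dense range and N ∈ B(ℂ^n) is a cyclic nilpotent operator (a single nilpotent Jordan block), then T ⊕ N is cyclic on H ⊕ ℂ^n, with cyclic vector f ⊕ e for any cyclic vectors f of T and e of N. -/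
/-!
A dense-range operator maps a dense subspace onto a dense subspace, and it maps the span of the
orbit of `f` onto the span of the orbit of `T f`; so `T f`, and by induction every `T ^ m f`, is
cyclic. For `T ⊕ N` with `N ^ m = 0`, the orbit of `(f, e)` contains `(T ^ (k + m) f, 0)` for all
`k`; since `T ^ m f` is cyclic, the closed span of the orbit contains `H ⊕ 0`. Subtracting
`(T ^ k f, 0)` from `(T ^ k f, N ^ k e)` leaves `(0, N ^ k e)`, so it also contains `0 ⊕ ℂ ^ n`.
-/

open Filter Topology ContinuousLinearMap

section Cyclic

variable {R M : Type*} [Semiring R] [TopologicalSpace M] [AddCommMonoid M] [Module R M]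

def orbitSpan (T : M →L[R] M) (x : M) : Submodule R M :=
  Submodule.span R (Set.range fun k : ℕ => (T ^ k) x)

theorem orbitSpan_apply_self (T : M →L[R] M) (x : M) :
    orbitSpan T (T x) = (orbitSpan T x).map (T : M →ₗ[R] M) := by
  rw [orbitSpan, orbitSpan, Submodule.map_span, ← Set.range_comp]
  congr 2
  ext k
  rw [Function.comp_apply, coe_coe, ← mul_apply_eq_comp,
    ← mul_apply_eq_comp, ← pow_succ, ← pow_succ']

variable [ContinuousConstSMul R M] [ContinuousAdd M]

def IsCyclicVector (T : M →L[R] M) (x : M) : Prop :=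
  (orbitSpan T x).topologicalClosure = ⊤

theorem IsCyclicVector.eq_top_of_isClosed {T : M →L[R] M} {x : M} (hx : IsCyclicVector T x)
    {p : Submodule R M} (hp : IsClosed (p : Set M)) (hmem : ∀ k : ℕ, (T ^ k) x ∈ p) : p = ⊤ :=
  top_unique <| hx ▸ (orbitSpan T x).topologicalClosure_minimal
    (Submodule.span_le.2 (Set.range_subset_iff.2 hmem)) hp

theorem IsCyclicVector.apply {T : M →L[R] M} (hT : DenseRange T) {x : M}
    (hx : IsCyclicVector T x) : IsCyclicVector T (T x) := by
  rw [IsCyclicVector, ← Submodule.dense_iff_topologicalClosure_eq_top, orbitSpan_apply_self,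
    Submodule.map_coe]
  exact hT.dense_image T.continuous (Submodule.dense_iff_topologicalClosure_eq_top.2 hx)

theorem IsCyclicVector.pow_apply {T : M →L[R] M} (hT : DenseRange T) {x : M}
    (hx : IsCyclicVector T x) (m : ℕ) : IsCyclicVector T ((T ^ m) x) := by
  induction m with
  | zero => simpa using hx
  | succ m ih => simpa only [pow_succ', mul_apply_eq_comp] using ih.apply hT

end Cyclic

section Prod

variable {R M₁ M₂ : Type*} [Ring R] [TopologicalSpace M₁] [AddCommGroup M₁] [Module R M₁]
  [TopologicalSpace M₂] [AddCommGroup M₂] [Module R M₂]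

theorem prodMap_pow_apply (T : M₁ →L[R] M₁) (N : M₂ →L[R] M₂) (k : ℕ) (x : M₁) (y : M₂) :
    ((T.prodMap N) ^ k) (x, y) = ((T ^ k) x, (N ^ k) y) := by
  induction k generalizing x y with
  | zero => rfl
  | succ k ih => simp only [pow_succ, mul_apply_eq_comp, ih, coe_prodMap', Prod.map]

variable [ContinuousConstSMul R M₁] [ContinuousAdd M₁] [ContinuousConstSMul R M₂]
  [ContinuousAdd M₂]

theorem IsCyclicVector.prodMap {T : M₁ →L[R] M₁} {N : M₂ →L[R] M₂} {m : ℕ} (hN : N ^ m = 0)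
    {f : M₁} {e : M₂} (hf : IsCyclicVector T ((T ^ m) f)) (he : IsCyclicVector N e) :
    IsCyclicVector (T.prodMap N) (f, e) := by
  set p := (orbitSpan (T.prodMap N) (f, e)).topologicalClosure
  have hp : IsClosed (p : Set (M₁ × M₂)) :=
    (orbitSpan (T.prodMap N) (f, e)).isClosed_topologicalClosure
  have horbit (k : ℕ) : ((T ^ k) f, (N ^ k) e) ∈ p := by
    rw [← prodMap_pow_apply]
    exact (orbitSpan (T.prodMap N) (f, e)).le_topologicalClosure (Submodule.subset_span ⟨k, rfl⟩)
  have hfst (x : M₁) : (x, 0) ∈ p := by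
    suffices p.comap (LinearMap.inl R M₁ M₂) = ⊤ from Submodule.eq_top_iff'.1 this x
    refine hf.eq_top_of_isClosed (hp.preimage (continuous_id.prodMk continuous_const)) fun k ↦ ?_
    have h := horbit (k + m)
    rwa [pow_add, pow_add, mul_apply_eq_comp, hN, mul_zero, zero_apply] at h
  have hsnd (v : M₂) : (0, v) ∈ p := by
    suffices p.comap (LinearMap.inr R M₁ M₂) = ⊤ from Submodule.eq_top_iff'.1 this v
    refine he.eq_top_of_isClosed (hp.preimage (continuous_const.prodMk continuous_id)) fun k ↦ ?_
    simpa using p.sub_mem (horbit k) (hfst ((T ^ k) f))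
  refine Submodule.eq_top_iff'.2 fun ⟨x, v⟩ ↦ ?_
  simpa using p.add_mem (hfst x) (hsnd v)

end Prod

theorem stmt19_general {H : Type*} [NormedAddCommGroup H] [InnerProductSpace ℂ H]
    (T : H →L[ℂ] H) (hT : DenseRange (⇑T)) (f : H)
    (hf : (Submodule.span ℂ (Set.range fun k : ℕ => (T ^ k) f)).topologicalClosure = ⊤)
    {n : ℕ} (N : EuclideanSpace ℂ (Fin n) →L[ℂ] EuclideanSpace ℂ (Fin n))
    (hNnil : N ^ n = 0) (e : EuclideanSpace ℂ (Fin n))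
    (he : (Submodule.span ℂ (Set.range fun k : ℕ => (N ^ k) e)).topologicalClosure = ⊤) :
    ((Submodule.span ℂ (Set.range fun k : ℕ => (T ^ k) (T f))).topologicalClosure = ⊤) ∧
    ((Submodule.span ℂ
      (Set.range fun k : ℕ => ((T.prodMap N) ^ k) (f, e))).topologicalClosure = ⊤) := by
  exact ⟨IsCyclicVector.apply hT hf,
    IsCyclicVector.prodMap hNnil (IsCyclicVector.pow_apply hT hf n) he⟩

/-- If `T` has dense range and `f` is a cyclic vector for `T`, then `T f` is
also a cyclic vector for `T`. Moreover, if `N` is a cyclic nilpotent operator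
(a single nilpotent Jordan block) on `ℂ^n` with cyclic vector `e`, then `T ⊕ N`
is cyclic on `H ⊕ ℂ^n` with cyclic vector `f ⊕ e`. -/
theorem stmt19 {H : Type*} [NormedAddCommGroup H] [InnerProductSpace ℂ H] [CompleteSpace H]
    (T : H →L[ℂ] H) (hT : DenseRange (⇑T)) (f : H)
    (hf : (Submodule.span ℂ (Set.range fun k : ℕ => (T ^ k) f)).topologicalClosure = ⊤)
    {n : ℕ} (N : EuclideanSpace ℂ (Fin n) →L[ℂ] EuclideanSpace ℂ (Fin n))
    (hNnil : N ^ n = 0) (e : EuclideanSpace ℂ (Fin n))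
    (he : (Submodule.span ℂ (Set.range fun k : ℕ => (N ^ k) e)).topologicalClosure = ⊤) :
    ((Submodule.span ℂ (Set.range fun k : ℕ => (T ^ k) (T f))).topologicalClosure = ⊤) ∧
    ((Submodule.span ℂ
      (Set.range fun k : ℕ => ((T.prodMap N) ^ k) (f, e))).topologicalClosure = ⊤) :=
  stmt19_general T hT f hf N hNnil e he
end
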